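/- arXiv:2011.12027 — 8 statements merged into one kernel-verified Lean document; each statement's English description precedes it below -/
import Mathlib

section
/- Let b be a nonzero real number. (i) For every fixed n ∈ ℤ and every t > 0, the series Σ_{k ∈ ℕ} exp(−t·((bn)²/2 + k))·exp((bn)²)·L_k(−2(bn)²) converges. (ii) For every fixed k ∈ ℕ, the series Σ_{n ∈ ℤ} exp(−t·((bn)²/2 + k))·exp((bn)²)·L_k(−2(bn)²) diverges when 0 < t ≤ 2 and converges when t > 2. -/
/-- The Laguerre polynomial `L_k(x) = ∑_{m=0}^k (1/m!) C(k,m) (-x)^m`. -/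
noncomputable def Lag (k : ℕ) (x : ℝ) : ℝ :=
  ∑ m ∈ Finset.range (k + 1), (1 / (m.factorial : ℝ)) * (k.choose m : ℝ) * (-x) ^ m

lemma lag_eval (k : ℕ) (a : ℝ) :
    Lag k (-2 * a) = ∑ m ∈ Finset.range (k + 1),
      (1 / (m.factorial : ℝ)) * (k.choose m : ℝ) * (2 * a) ^ m := by
  simp [Lag, neg_mul, neg_neg]

lemma one_le_lag (k : ℕ) {a : ℝ} (ha : 0 ≤ a) : 1 ≤ Lag k (-2 * a) := by
  rw [lag_eval]
  have h := Finset.single_le_sum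
    (f := fun m => (1 / (m.factorial : ℝ)) * (k.choose m : ℝ) * (2 * a) ^ m)
    (fun m _ => by positivity) (Finset.mem_range.mpr (Nat.succ_pos k))
  simpa using h

lemma lag_nonneg (k : ℕ) {a : ℝ} (ha : 0 ≤ a) : 0 ≤ Lag k (-2 * a) :=
  le_trans zero_le_one (one_le_lag k ha)

lemma amgm {x y : ℝ} (hx : 0 ≤ x) (hy : 0 ≤ y) : 2 * Real.sqrt (x * y) ≤ x + y := by
  rw [Real.sqrt_mul hx]
  nlinarith [sq_nonneg (Real.sqrt x - Real.sqrt y), Real.sq_sqrt hx, Real.sq_sqrt hy]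

lemma lag_le_exp (k : ℕ) {a : ℝ} (ha : 0 ≤ a) :
    Lag k (-2 * a) ≤ Real.exp (2 * Real.sqrt (2 * a * k)) := by
  rw [lag_eval]
  set u := Real.sqrt (2 * a * k) with hu_def
  have hu : 0 ≤ u := Real.sqrt_nonneg _
  have hu2 : u ^ 2 = 2 * a * k := Real.sq_sqrt (by positivity)
  have step1 : ∀ m ∈ Finset.range (k + 1),
      (1 / (m.factorial : ℝ)) * (k.choose m : ℝ) * (2 * a) ^ m
        ≤ (u ^ m / m.factorial) ^ 2 := by
    intro m _
    have hc : (k.choose m : ℝ) * m.factorial ≤ (k : ℝ) ^ m := by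
      have h := Nat.descFactorial_le_pow k m
      rw [Nat.descFactorial_eq_factorial_mul_choose] at h
      have h2 : ((m.factorial * k.choose m : ℕ) : ℝ) ≤ ((k ^ m : ℕ) : ℝ) :=
        Nat.cast_le.mpr h
      push_cast at h2
      linarith
    have hm : (0:ℝ) < m.factorial := by positivity
    have key : (u ^ m / m.factorial) ^ 2 = (2 * a * k) ^ m / (m.factorial : ℝ) ^ 2 := by
      rw [div_pow, ← pow_mul, mul_comm m 2, pow_mul, hu2]
    rw [key, mul_pow (2*a) (k:ℝ) m, le_div_iff₀ (by positivity)]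
    have h2a : (0:ℝ) ≤ (2*a)^m := by positivity
    calc 1 / (m.factorial : ℝ) * (k.choose m : ℝ) * (2 * a) ^ m * (m.factorial : ℝ) ^ 2
        = ((k.choose m : ℝ) * m.factorial) * (2*a)^m := by
          field_simp
      _ ≤ (k:ℝ)^m * (2*a)^m := mul_le_mul_of_nonneg_right hc h2a
      _ = (2*a)^m * (k:ℝ)^m := mul_comm _ _
  calc ∑ m ∈ Finset.range (k + 1), (1 / (m.factorial : ℝ)) * (k.choose m : ℝ) * (2 * a) ^ m
      ≤ ∑ m ∈ Finset.range (k + 1), (u ^ m / m.factorial) ^ 2 := Finset.sum_le_sum step1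
    _ ≤ (∑ m ∈ Finset.range (k + 1), u ^ m / m.factorial) ^ 2 :=
        Finset.sum_sq_le_sq_sum_of_nonneg (fun m _ => by positivity)
    _ ≤ (Real.exp u) ^ 2 := by
        apply pow_le_pow_left₀ (Finset.sum_nonneg fun m _ => by positivity)
        exact Real.sum_le_exp_of_nonneg hu _
    _ = Real.exp (2 * u) := by rw [two_mul, Real.exp_add, sq]

/-- For fixed `n`, the series over `k` of `exp(-t((bn)²/2+k))·exp((bn)²)·L_k(-2(bn)²)`
converges for every `t > 0`; for fixed `k`, the corresponding series over `n ∈ ℤ`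
diverges for `0 < t ≤ 2` and converges for `t > 2`. -/
theorem summability_fixed_n_or_k (b : ℝ) (hb : b ≠ 0) :
    (∀ (n : ℤ) (t : ℝ), 0 < t →
      Summable (fun k : ℕ =>
        Real.exp (-t * ((b * (n : ℝ)) ^ 2 / 2 + (k : ℝ))) *
          Real.exp ((b * (n : ℝ)) ^ 2) * Lag k (-2 * (b * (n : ℝ)) ^ 2))) ∧
    (∀ (k : ℕ) (t : ℝ),
      (0 < t → t ≤ 2 →
        ¬ Summable (fun n : ℤ =>
          Real.exp (-t * ((b * (n : ℝ)) ^ 2 / 2 + (k : ℝ))) *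
            Real.exp ((b * (n : ℝ)) ^ 2) * Lag k (-2 * (b * (n : ℝ)) ^ 2))) ∧
      (2 < t →
        Summable (fun n : ℤ =>
          Real.exp (-t * ((b * (n : ℝ)) ^ 2 / 2 + (k : ℝ))) *
            Real.exp ((b * (n : ℝ)) ^ 2) * Lag k (-2 * (b * (n : ℝ)) ^ 2)))) := by
  constructor
  · -- part (i): fixed n, sum over k
    intro n t ht
    set a : ℝ := (b * (n : ℝ)) ^ 2 with ha_def
    have ha : 0 ≤ a := sq_nonneg _
    have hr : Real.exp (-(t/2)) < 1 := Real.exp_lt_one_iff.mpr (by linarith)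
    apply Summable.of_nonneg_of_le
      (f := fun k : ℕ => Real.exp (a - t*a/2 + 4*a/t) * Real.exp (-(t/2)) ^ k)
    · intro k
      have h := lag_nonneg k ha
      exact mul_nonneg (mul_nonneg (Real.exp_pos _).le (Real.exp_pos _).le) h
    · intro k
      have hsq : 2 * Real.sqrt (2 * a * k) ≤ 4*a/t + t*k/2 := by
        have h := amgm (x := 4*a/t) (y := t*k/2) (by positivity) (by positivity)
        have he : 4*a/t * (t*k/2) = 2 * a * k := by field_simp; ring
        rwa [he] at h
      have hl := lag_le_exp k ha
      calc Real.exp (-t * (a / 2 + k)) * Real.exp a * Lag k (-2 * a)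
          ≤ Real.exp (-t * (a / 2 + k)) * Real.exp a * Real.exp (2 * Real.sqrt (2*a*k)) := by
            apply mul_le_mul_of_nonneg_left hl (by positivity)
        _ = Real.exp (-t * (a / 2 + k) + a + 2 * Real.sqrt (2*a*k)) := by
            rw [← Real.exp_add, ← Real.exp_add]
        _ ≤ Real.exp ((a - t*a/2 + 4*a/t) + k * (-(t/2))) := by
            apply Real.exp_le_exp.mpr; nlinarith
        _ = Real.exp (a - t*a/2 + 4*a/t) * Real.exp (-(t/2)) ^ k := by
            rw [Real.exp_add, ← Real.exp_nat_mul]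
    · exact (summable_geometric_of_lt_one (Real.exp_nonneg _) hr).mul_left _
  · intro k t
    constructor
    · -- divergence for 0 < t ≤ 2
      intro ht ht2 hs
      have hlb : ∀ n : ℤ, Real.exp (-(t*k)) ≤
          Real.exp (-t * ((b * (n : ℝ)) ^ 2 / 2 + (k : ℝ))) *
            Real.exp ((b * (n : ℝ)) ^ 2) * Lag k (-2 * (b * (n : ℝ)) ^ 2) := by
        intro n
        set a : ℝ := (b * (n : ℝ)) ^ 2 with ha_def
        have ha : 0 ≤ a := sq_nonneg _
        have h1 : Real.exp (-(t*k)) ≤ Real.exp (-t * (a/2 + k)) * Real.exp a := by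
          rw [← Real.exp_add]
          apply Real.exp_le_exp.mpr
          nlinarith
        calc Real.exp (-(t*k)) ≤ Real.exp (-t * (a/2 + k)) * Real.exp a := h1
          _ = Real.exp (-t * (a/2 + k)) * Real.exp a * 1 := (mul_one _).symm
          _ ≤ Real.exp (-t * (a/2 + k)) * Real.exp a * Lag k (-2 * a) := by
              apply mul_le_mul_of_nonneg_left (one_le_lag k ha) (by positivity)
      have h0 := hs.tendsto_cofinite_zero
      have hev : ∀ᶠ n : ℤ in Filter.cofinite,
          Real.exp (-t * ((b * (n : ℝ)) ^ 2 / 2 + (k : ℝ))) *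
            Real.exp ((b * (n : ℝ)) ^ 2) * Lag k (-2 * (b * (n : ℝ)) ^ 2)
            < Real.exp (-(t*k)) :=
        h0.eventually (gt_mem_nhds (Real.exp_pos _))
      obtain ⟨n, hn⟩ := hev.exists
      exact absurd (hlb n) (not_le.mpr hn)
    · -- convergence for t > 2
      intro ht
      have ht0 : 0 < t := by linarith
      set s : ℝ := (t - 2) / 4 with hs_def
      have hs0 : 0 < s := by rw [hs_def]; linarith
      have hb2 : 0 < b ^ 2 := by positivity
      have hr : Real.exp (-(s * b^2)) < 1 := Real.exp_lt_one_iff.mpr (by nlinarith)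
      apply Summable.of_nonneg_of_le
        (f := fun n : ℤ => Real.exp (2*k/s - t*k) * Real.exp (-(s * b^2)) ^ n.natAbs)
      · intro n
        have h := lag_nonneg k (sq_nonneg (b * (n:ℝ)))
        exact mul_nonneg (mul_nonneg (Real.exp_pos _).le (Real.exp_pos _).le) h
      · intro n
        set a : ℝ := (b * (n : ℝ)) ^ 2 with ha_def
        have ha : 0 ≤ a := sq_nonneg _
        have hsq : 2 * Real.sqrt (2 * a * k) ≤ s*a + 2*k/s := by
          have h := amgm (x := s*a) (y := 2*k/s) (by positivity) (by positivity)
          have he : s*a * (2*k/s) = 2 * a * k := by field_simp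
          rwa [he] at h
        have hna : (n.natAbs : ℝ) ≤ (n : ℝ)^2 := by
          have h1 : ((n.natAbs : ℝ))^2 = (n : ℝ)^2 := by
            rw [Nat.cast_natAbs, Int.cast_abs, sq_abs]
          have h2 : (n.natAbs : ℝ) ≤ ((n.natAbs : ℝ))^2 := by
            exact_mod_cast Nat.le_self_pow two_ne_zero n.natAbs
          linarith
        have haeq : a = b^2 * (n:ℝ)^2 := by rw [ha_def]; ring
        have hl := lag_le_exp k ha
        calc Real.exp (-t * (a / 2 + k)) * Real.exp a * Lag k (-2 * a)
            ≤ Real.exp (-t * (a / 2 + k)) * Real.exp a * Real.exp (2 * Real.sqrt (2*a*k)) := by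
              apply mul_le_mul_of_nonneg_left hl (by positivity)
          _ = Real.exp (-t * (a / 2 + k) + a + 2 * Real.sqrt (2*a*k)) := by
              rw [← Real.exp_add, ← Real.exp_add]
          _ ≤ Real.exp ((2*k/s - t*k) + (n.natAbs : ℝ) * (-(s * b^2))) := by
              apply Real.exp_le_exp.mpr
              have key : a * (1 - t/2 + s) ≤ -(s * b^2) * (n.natAbs : ℝ) := by
                have h1 : 1 - t/2 + s = -s := by rw [hs_def]; ring
                rw [h1, haeq]
                have := mul_le_mul_of_nonneg_left hna (le_of_lt (mul_pos hs0 hb2))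
                nlinarith
              nlinarith
          _ = Real.exp (2*k/s - t*k) * Real.exp (-(s * b^2)) ^ n.natAbs := by
              rw [Real.exp_add, ← Real.exp_nat_mul]
      · apply Summable.of_nat_of_neg <;>
          · simp only [Int.natAbs_natCast, Int.natAbs_neg]
            exact (summable_geometric_of_lt_one (Real.exp_nonneg _) hr).mul_left _
end

section
/- Let b be a nonzero real number. Define σ(b) = inf{ t > 0 : Σ_{n ∈ ℤ} Σ_{k ∈ ℕ} exp(−t·((bn)²/2 + k))·exp((bn)²)·L_k(−2(bn)²) < ∞ }. Then σ(b) = lim_{N → ∞} sup{ ((bn)² + log L_k(−2(bn)²)) / ((bn)²/2 + k + 1/2) : n ∈ ℤ, k ∈ ℕ, |n| ≥ N, k ≥ N }, i.e. σ(b) equals the limit superior of ((bn)² + log L_k(−2(bn)²)) / ((bn)²/2 + k + 1/2) as min(|n|, k) → ∞. -/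
lemma Lag_neg_eq (k : ℕ) (y : ℝ) :
    Lag k (-y) = ∑ m ∈ Finset.range (k + 1), (k.choose m : ℝ) * y ^ m / m.factorial := by
  unfold Lag
  apply Finset.sum_congr rfl
  intro m _
  rw [neg_neg]
  field_simp

lemma choose_le_two_pow (k m : ℕ) : k.choose m ≤ 2 ^ k := by
  rcases le_or_gt m k with h | h
  · calc k.choose m ≤ ∑ i ∈ Finset.range (k+1), k.choose i :=
        Finset.single_le_sum (fun i _ => Nat.zero_le _) (Finset.mem_range.mpr (by omega))
    _ = 2 ^ k := Nat.sum_range_choose k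
  · simp [Nat.choose_eq_zero_of_lt h]

lemma one_le_Lag (k : ℕ) {y : ℝ} (hy : 0 ≤ y) : 1 ≤ Lag k (-y) := by
  rw [Lag_neg_eq]
  have h0 : (0:ℕ) ∈ Finset.range (k+1) := Finset.mem_range.mpr (by omega)
  have := Finset.single_le_sum
    (f := fun m => (k.choose m : ℝ) * y ^ m / m.factorial)
    (fun m _ => by positivity) h0
  simpa using this

lemma Lag_pos (k : ℕ) {y : ℝ} (hy : 0 ≤ y) : 0 < Lag k (-y) :=
  lt_of_lt_of_le one_pos (one_le_Lag k hy)

lemma Lag_le_exp (k : ℕ) {y : ℝ} (hy : 0 ≤ y) : Lag k (-y) ≤ 2 ^ k * Real.exp y := by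
  rw [Lag_neg_eq]
  have h1 : ∀ m ∈ Finset.range (k+1),
      (k.choose m : ℝ) * y ^ m / m.factorial ≤ (2:ℝ) ^ k * (y ^ m / m.factorial) := by
    intro m _
    have hc : (k.choose m : ℝ) ≤ 2 ^ k := by exact_mod_cast choose_le_two_pow k m
    rw [mul_div_assoc]
    exact mul_le_mul_of_nonneg_right hc (by positivity)
  calc _ ≤ ∑ m ∈ Finset.range (k+1), (2:ℝ) ^ k * (y ^ m / m.factorial) :=
        Finset.sum_le_sum h1
    _ = 2 ^ k * ∑ m ∈ Finset.range (k+1), (y ^ m / m.factorial) := by rw [Finset.mul_sum]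
    _ ≤ 2 ^ k * Real.exp y :=
        mul_le_mul_of_nonneg_left (Real.sum_le_exp_of_nonneg hy (k+1)) (by positivity)

lemma Lag_le_poly (k : ℕ) {y : ℝ} (hy : 0 ≤ y) :
    Lag k (-y) ≤ (k+1) * 2 ^ k * (1 + y) ^ k := by
  rw [Lag_neg_eq]
  have h1 : ∀ m ∈ Finset.range (k+1),
      (k.choose m : ℝ) * y ^ m / m.factorial ≤ 2 ^ k * (1 + y) ^ k := by
    intro m hm
    rw [Finset.mem_range] at hm
    have hc : (k.choose m : ℝ) ≤ 2 ^ k := by exact_mod_cast choose_le_two_pow k m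
    have hf : (1:ℝ) ≤ m.factorial := by exact_mod_cast Nat.one_le_iff_ne_zero.mpr m.factorial_ne_zero
    have hy1 : y ^ m ≤ (1 + y) ^ k :=
      calc y ^ m ≤ (1 + y) ^ m := pow_le_pow_left₀ hy (by linarith) m
        _ ≤ (1 + y) ^ k := pow_le_pow_right₀ (by linarith) (by omega)
    calc (k.choose m : ℝ) * y ^ m / m.factorial ≤ (k.choose m : ℝ) * y ^ m / 1 := by
          apply div_le_div_of_nonneg_left (by positivity) one_pos hf
      _ = (k.choose m : ℝ) * y ^ m := by ring
      _ ≤ 2 ^ k * (1 + y) ^ k := mul_le_mul hc hy1 (by positivity) (by positivity)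
  calc _ ≤ ∑ _m ∈ Finset.range (k+1), (2:ℝ) ^ k * (1 + y) ^ k := Finset.sum_le_sum h1
    _ = (k+1) * 2 ^ k * (1 + y) ^ k := by
        rw [Finset.sum_const, Finset.card_range]; push_cast; ring

lemma Lag_ge_term (k : ℕ) {y : ℝ} (hy : 0 ≤ y) : y ^ k / k.factorial ≤ Lag k (-y) := by
  rw [Lag_neg_eq]
  have hk : k ∈ Finset.range (k+1) := Finset.mem_range.mpr (by omega)
  have := Finset.single_le_sum
    (f := fun m => (k.choose m : ℝ) * y ^ m / m.factorial)
    (fun m _ => by positivity) hk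
  simpa [Nat.choose_self] using this

lemma neg_two_mul' (u : ℝ) : (-2 * u) = -(2*u) := by ring

lemma logLag_nonneg (k : ℕ) {u : ℝ} (hu : 0 ≤ u) : 0 ≤ Real.log (Lag k (-2*u)) := by
  rw [neg_two_mul']
  exact Real.log_nonneg (one_le_Lag k (by linarith))

lemma logLag_le (k : ℕ) {u : ℝ} (hu : 0 ≤ u) : Real.log (Lag k (-2*u)) ≤ 2*u + k := by
  rw [neg_two_mul']
  have h1 : Real.log (Lag k (-(2*u))) ≤ Real.log (2 ^ k * Real.exp (2*u)) :=
    Real.log_le_log (Lag_pos k (by linarith)) (Lag_le_exp k (by linarith))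
  have h2 : Real.log ((2:ℝ) ^ k * Real.exp (2*u)) = k * Real.log 2 + 2*u := by
    rw [Real.log_mul (by positivity) (by positivity), Real.log_pow, Real.log_exp]
  have h3 : Real.log 2 ≤ 1 := by
    have := Real.log_two_lt_d9; linarith
  have h4 : (k:ℝ) * Real.log 2 ≤ k := by
    calc (k:ℝ) * Real.log 2 ≤ (k:ℝ) * 1 := by
          exact mul_le_mul_of_nonneg_left h3 (by positivity)
      _ = k := by ring
  linarith [h1, h2 ▸ h1]

lemma logLag_ge (k : ℕ) {u : ℝ} (hu : 0 < u) :
    k * Real.log (2*u) - k * Real.log k ≤ Real.log (Lag k (-2*u)) := by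
  rw [neg_two_mul']
  have hterm : (0:ℝ) < (2*u) ^ k / k.factorial := by positivity
  have h1 : Real.log ((2*u) ^ k / k.factorial) ≤ Real.log (Lag k (-(2*u))) :=
    Real.log_le_log hterm (Lag_ge_term k (by linarith))
  have h2 : Real.log ((2*u) ^ k / k.factorial) = k * Real.log (2*u) - Real.log k.factorial := by
    rw [Real.log_div (by positivity) (by positivity), Real.log_pow]
  have h3 : Real.log k.factorial ≤ k * Real.log k := by
    calc Real.log k.factorial ≤ Real.log ((k:ℝ) ^ k) := by
          apply Real.log_le_log (by positivity)
          exact_mod_cast Nat.factorial_le_pow k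
      _ = k * Real.log k := Real.log_pow k k
  linarith [h2 ▸ h1]

lemma num_ge_two_den (k : ℕ) (hk : 15 ≤ k) {u : ℝ} (hu : 4*k ≤ u) (hu0 : 0 < u) :
    2 * (u/2 + k + 1/2) ≤ u + Real.log (Lag k (-2*u)) := by
  have hk0 : (0:ℝ) < k := by exact_mod_cast Nat.lt_of_lt_of_le (by norm_num) hk
  have hkr : (15:ℝ) ≤ k := by exact_mod_cast hk
  have h1 := logLag_ge k hu0
  have h2 : Real.log (8*k) ≤ Real.log (2*u) := by
    apply Real.log_le_log (by positivity); linarith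
  have h3 : Real.log (8*(k:ℝ)) = 3 * Real.log 2 + Real.log k := by
    rw [show (8:ℝ) * k = 2^3 * k by norm_num, Real.log_mul (by positivity) (by positivity),
      Real.log_pow]
    push_cast; ring
  have h4 : (0.6931471803 : ℝ) < Real.log 2 := Real.log_two_gt_d9
  have h5 : (k:ℝ) * Real.log (8*k) ≤ k * Real.log (2*u) :=
    mul_le_mul_of_nonneg_left h2 (by positivity)
  nlinarith [h1, h5, h3, h4, hkr]


lemma summable_exp_neg_nat {a : ℝ} (ha : 0 < a) :
    Summable fun n : ℕ => Real.exp (-(a * n)) := by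
  have : ∀ n : ℕ, Real.exp (-(a * n)) = (Real.exp (-a)) ^ n := by
    intro n
    rw [← Real.exp_nat_mul]; ring_nf
  simp_rw [this]
  exact summable_geometric_of_lt_one (Real.exp_nonneg _) (Real.exp_lt_one_iff.mpr (by linarith))

set_option maxHeartbeats 1000000 in
lemma summable_poly_exp_neg_sq_nat {a : ℝ} (ha : 0 < a) (N : ℕ) {A B : ℝ} (hA : 0 ≤ A)
    (hB : 0 ≤ B) : Summable fun n : ℕ => (A + B * (n:ℝ)^2) ^ N * Real.exp (-(a * (n:ℝ)^2)) := by
  set r := Real.exp (-a) with hr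
  have hr0 : 0 < r := Real.exp_pos _
  have hr1 : r < 1 := Real.exp_lt_one_iff.mpr (by linarith)
  have hs : Summable fun n : ℕ => ((n:ℝ)+1) ^ (2*N) * r ^ n := by
    have h1 : Summable fun n : ℕ => (n:ℝ) ^ (2*N) * r ^ n := by
      simpa using summable_pow_mul_geometric_of_norm_lt_one (2*N)
        (r := r) (by rw [Real.norm_eq_abs, abs_of_pos hr0]; exact hr1)
    have h2 : Summable fun n : ℕ => ((n+1:ℕ):ℝ) ^ (2*N) * r ^ (n+1) :=
      (summable_nat_add_iff 1).mpr h1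
    have h3 : Summable fun n : ℕ => r * (((n:ℝ)+1) ^ (2*N) * r ^ n) := by
      apply h2.congr
      intro n; push_cast; ring
    exact (summable_mul_left_iff (ne_of_gt hr0)).mp h3
  apply Summable.of_nonneg_of_le (fun n => by positivity) _ (hs.mul_left ((A+B)^N))
  intro n
  have h4 : A + B * (n:ℝ)^2 ≤ (A+B) * ((n:ℝ)+1)^2 := by nlinarith [mul_nonneg hA (sq_nonneg (n:ℝ)), mul_nonneg hA ((by positivity : (0:ℝ) ≤ (n:ℝ))), mul_nonneg hB ((by positivity : (0:ℝ) ≤ (n:ℝ))), sq_nonneg (n:ℝ)]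
  have h5 : (A + B * (n:ℝ)^2) ^ N ≤ (A+B)^N * ((n:ℝ)+1)^(2*N) := by
    calc (A + B * (n:ℝ)^2) ^ N ≤ ((A+B) * ((n:ℝ)+1)^2) ^ N :=
          pow_le_pow_left₀ (by positivity) h4 N
      _ = (A+B)^N * ((n:ℝ)+1)^(2*N) := by rw [mul_pow, ← pow_mul]
  have h6 : Real.exp (-(a * (n:ℝ)^2)) ≤ r ^ n := by
    rw [hr, ← Real.exp_nat_mul]
    apply Real.exp_le_exp.mpr
    have : (n:ℝ) ≤ (n:ℝ)^2 := by exact_mod_cast Nat.le_self_pow two_ne_zero n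
    nlinarith
  calc (A + B * (n:ℝ)^2) ^ N * Real.exp (-(a * (n:ℝ)^2))
      ≤ ((A+B)^N * ((n:ℝ)+1)^(2*N)) * r ^ n := by
        apply mul_le_mul h5 h6 (Real.exp_nonneg _) (by positivity)
    _ = (A+B)^N * (((n:ℝ)+1) ^ (2*N) * r ^ n) := by ring

lemma summable_poly_exp_neg_sq_int {a : ℝ} (ha : 0 < a) (N : ℕ) {A B : ℝ} (hA : 0 ≤ A)
    (hB : 0 ≤ B) : Summable fun n : ℤ => (A + B * (n:ℝ)^2) ^ N * Real.exp (-(a * (n:ℝ)^2)) := by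
  apply summable_int_iff_summable_nat_and_neg.mpr
  constructor
  · exact_mod_cast summable_poly_exp_neg_sq_nat ha N hA hB
  · have := summable_poly_exp_neg_sq_nat ha N hA hB
    apply this.congr
    intro n
    push_cast
    norm_num

lemma summable_exp_neg_sq_int {a : ℝ} (ha : 0 < a) :
    Summable fun n : ℤ => Real.exp (-(a * (n:ℝ)^2)) := by
  have := summable_poly_exp_neg_sq_int ha 0 (le_refl (0:ℝ)) (le_refl (0:ℝ))
  simpa using this


lemma Lag_pos' (k : ℕ) {u : ℝ} (hu : 0 ≤ u) : 0 < Lag k (-2*u) := by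
  rw [neg_two_mul']; exact Lag_pos k (by linarith)

lemma Lag_le_exp' (k : ℕ) {u : ℝ} (hu : 0 ≤ u) : Lag k (-2*u) ≤ 2^k * Real.exp (2*u) := by
  rw [neg_two_mul']; exact Lag_le_exp k (by linarith)

lemma Lag_le_poly' (k : ℕ) {u : ℝ} (hu : 0 ≤ u) :
    Lag k (-2*u) ≤ (k+1) * 2^k * (1 + 2*u)^k := by
  rw [neg_two_mul']; exact Lag_le_poly k (by linarith)

noncomputable def sigma (b : ℝ) : ℝ :=
  sInf {t : ℝ | 0 < t ∧ Summable (fun p : ℤ × ℕ =>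
    Real.exp (-t * ((b * (p.1 : ℝ)) ^ 2 / 2 + (p.2 : ℝ))) *
      Real.exp ((b * (p.1 : ℝ)) ^ 2) * Lag p.2 (-2 * (b * (p.1 : ℝ)) ^ 2))}

lemma f_eq (b t : ℝ) (n : ℤ) (k : ℕ) :
    Real.exp (-t * ((b * (n : ℝ)) ^ 2 / 2 + (k : ℝ))) * Real.exp ((b * (n : ℝ)) ^ 2) *
      Lag k (-2 * (b * (n : ℝ)) ^ 2)
    = Real.exp (((b * (n : ℝ)) ^ 2 + Real.log (Lag k (-2 * (b * (n : ℝ)) ^ 2)))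
        - t * ((b * (n : ℝ)) ^ 2 / 2 + (k : ℝ))) := by
  conv_lhs => rw [← Real.exp_log (Lag_pos' k (sq_nonneg (b * (n:ℝ))))]
  rw [← Real.exp_add, ← Real.exp_add]
  congr 1
  ring

set_option maxHeartbeats 4000000 in
/-- `σ(b)` equals the limit superior of
`((bn)² + log L_k(-2(bn)²)) / ((bn)²/2 + k + 1/2)` as `min(|n|, k) → ∞`, i.e. the limit
as `N → ∞` of the suprema over `|n| ≥ N`, `k ≥ N`. -/
theorem sigma_eq_limsup (b : ℝ) (hb : b ≠ 0) :
    Filter.Tendsto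
      (fun N : ℕ => sSup {r : ℝ | ∃ (n : ℤ) (k : ℕ), (N : ℤ) ≤ |n| ∧ N ≤ k ∧
        r = ((b * (n : ℝ)) ^ 2 + Real.log (Lag k (-2 * (b * (n : ℝ)) ^ 2))) /
          ((b * (n : ℝ)) ^ 2 / 2 + (k : ℝ) + 1 / 2)})
      Filter.atTop (nhds (sigma b)) := by
  have hbpos : 0 < |b| := abs_pos.mpr hb
  set Sset : ℕ → Set ℝ := fun N => {r : ℝ | ∃ (n : ℤ) (k : ℕ), (N : ℤ) ≤ |n| ∧ N ≤ k ∧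
        r = ((b * (n : ℝ)) ^ 2 + Real.log (Lag k (-2 * (b * (n : ℝ)) ^ 2))) /
          ((b * (n : ℝ)) ^ 2 / 2 + (k : ℝ) + 1 / 2)} with hSset
  have hden : ∀ (n : ℤ) (k : ℕ), (0:ℝ) < (b * (n:ℝ))^2/2 + (k:ℝ) + 1/2 := by
    intro n k
    have := sq_nonneg (b * (n:ℝ))
    have : (0:ℝ) ≤ (k:ℝ) := Nat.cast_nonneg k
    positivity
  have hu0 : ∀ n : ℤ, (0:ℝ) ≤ (b * (n:ℝ))^2 := fun n => sq_nonneg _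
  -- all ratios lie in [0,6]
  have hr6 : ∀ N : ℕ, ∀ r ∈ Sset N, 0 ≤ r ∧ r ≤ 6 := by
    rintro N r ⟨n, k, hn, hk, rfl⟩
    have h1 := logLag_nonneg k (hu0 n)
    have h2 := logLag_le k (hu0 n)
    have hk0 : (0:ℝ) ≤ (k:ℝ) := Nat.cast_nonneg k
    constructor
    · exact div_nonneg (by linarith [hu0 n]) (hden n k).le
    · rw [div_le_iff₀ (hden n k)]
      nlinarith [hu0 n]
  have hne : ∀ N : ℕ, (Sset N).Nonempty := by
    intro N
    exact ⟨_, (N:ℤ), N, by simp, le_refl N, rfl⟩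
  have hbdd : ∀ N : ℕ, BddAbove (Sset N) := fun N => ⟨6, fun r hr => (hr6 N r hr).2⟩
  have hS6 : ∀ N : ℕ, sSup (Sset N) ≤ 6 := fun N => csSup_le (hne N) fun r hr => (hr6 N r hr).2
  -- lower bound 2 for each sup
  have hS2 : ∀ N : ℕ, 2 ≤ sSup (Sset N) := by
    intro N
    set k : ℕ := max N 15 with hkdef
    have hk15 : 15 ≤ k := le_max_right N 15
    have hkN : N ≤ k := le_max_left N 15
    have hkpos : (0:ℝ) < (k:ℝ) := by
      have : (15:ℝ) ≤ (k:ℝ) := by exact_mod_cast hk15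
      linarith
    set c : ℕ := ⌈2 * Real.sqrt k / |b|⌉₊ with hcdef
    have hcpos : 0 < c := Nat.ceil_pos.mpr (by positivity)
    set n : ℤ := (N:ℤ) + (c:ℤ) with hndef
    have hnpos : 0 < n := by
      have h := hcpos; omega
    have hnN : (N:ℤ) ≤ |n| := by
      rw [abs_of_pos hnpos]; omega
    have hnreal : 2 * Real.sqrt k / |b| ≤ (n:ℝ) := by
      have h1 : 2 * Real.sqrt k / |b| ≤ (c:ℝ) := Nat.le_ceil _
      have h2 : (c:ℝ) ≤ (n:ℝ) := by
        rw [hndef]; push_cast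
        linarith [Nat.cast_nonneg (α := ℝ) N]
      linarith
    have hsq : 2 * Real.sqrt k ≤ |b| * (n:ℝ) := by
      rw [div_le_iff₀ hbpos] at hnreal
      linarith [hnreal, mul_comm (n:ℝ) |b|]
    have hu4k : 4 * (k:ℝ) ≤ (b * (n:ℝ))^2 := by
      have h1 : (2 * Real.sqrt k)^2 ≤ (|b| * (n:ℝ))^2 :=
        pow_le_pow_left₀ (by positivity) hsq 2
      have h2 : (2 * Real.sqrt k)^2 = 4 * (k:ℝ) := by
        rw [mul_pow, Real.sq_sqrt hkpos.le]; norm_num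
      have h3 : (|b| * (n:ℝ))^2 = (b * (n:ℝ))^2 := by
        rw [mul_pow, mul_pow, sq_abs]
      linarith
    have hu0pos : 0 < (b * (n:ℝ))^2 := by
      have hne0 : (b * (n:ℝ)) ≠ 0 := mul_ne_zero hb (by exact_mod_cast hnpos.ne')
      positivity
    have hnum := num_ge_two_den k hk15 hu4k hu0pos
    have hmem : ((b * (n:ℝ))^2 + Real.log (Lag k (-2 * (b * (n:ℝ))^2))) /
        ((b * (n:ℝ))^2/2 + (k:ℝ) + 1/2) ∈ Sset N := ⟨n, k, hnN, hkN, rfl⟩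
    have h2r : 2 ≤ ((b * (n:ℝ))^2 + Real.log (Lag k (-2 * (b * (n:ℝ))^2))) /
        ((b * (n:ℝ))^2/2 + (k:ℝ) + 1/2) := by
      rw [le_div_iff₀ (hden n k)]
      linarith [hnum]
    exact le_trans h2r (le_csSup (hbdd N) hmem)
  -- antitone
  have hanti : Antitone fun N => sSup (Sset N) := by
    intro N M hNM
    apply csSup_le_csSup (hbdd N) (hne M)
    rintro r ⟨n, k, hn, hk, rfl⟩
    exact ⟨n, k, le_trans (by exact_mod_cast hNM) hn, le_trans hNM hk, rfl⟩
  have hbb : BddBelow (Set.range fun N => sSup (Sset N)) := by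
    refine ⟨2, ?_⟩
    rintro x ⟨N, rfl⟩
    exact hS2 N
  set L : ℝ := ⨅ N : ℕ, sSup (Sset N) with hLdef
  have hL2 : 2 ≤ L := le_ciInf hS2
  have htend : Filter.Tendsto (fun N => sSup (Sset N)) Filter.atTop (nhds L) :=
    tendsto_atTop_ciInf hanti hbb
  -- summability above L
  have hmemT : ∀ t : ℝ, L < t → 0 < t ∧ Summable (fun p : ℤ × ℕ =>
      Real.exp (-t * ((b * (p.1 : ℝ)) ^ 2 / 2 + (p.2 : ℝ))) *
        Real.exp ((b * (p.1 : ℝ)) ^ 2) * Lag p.2 (-2 * (b * (p.1 : ℝ)) ^ 2)) := by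
    intro t ht
    obtain ⟨N, hN⟩ := exists_lt_of_ciInf_lt ht
    have ht2 : 2 < t := lt_of_le_of_lt (hS2 N) hN
    have ht0 : 0 < t := by linarith
    refine ⟨ht0, ?_⟩
    set s := sSup (Sset N) with hsdef
    have hs2 : 2 ≤ s := hS2 N
    have hδ : 0 < t - s := by linarith [hN]
    have hε : 0 < t/2 - 1 := by linarith
    have ht1 : 0 < t - 1 := by linarith
    have hb2 : (0:ℝ) < b^2 := by positivity
    set g1 : ℤ × ℕ → ℝ := fun p =>
      (Real.exp (s/2) * Real.exp (-((t-s)*b^2/2 * (p.1:ℝ)^2))) *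
        Real.exp (-((t-s) * (p.2:ℝ))) with hg1
    set g2 : ℤ × ℕ → ℝ := fun p =>
      (((N:ℝ)+1) * 2^N * ((1 + 2*b^2 * (p.1:ℝ)^2)^N *
        Real.exp (-((t/2-1)*b^2 * (p.1:ℝ)^2)))) * Real.exp (-(1 * (p.2:ℝ))) with hg2
    set g3 : ℤ × ℕ → ℝ := fun p =>
      (Real.exp (4*b^2*(N:ℝ)^2) * Real.exp (-(b^2 * (p.1:ℝ)^2))) *
        Real.exp (-((t-1) * (p.2:ℝ))) with hg3
    have hg1s : Summable g1 :=
      Summable.mul_of_nonneg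
        ((summable_exp_neg_sq_int (by positivity : (0:ℝ) < (t-s)*b^2/2)).mul_left _)
        (summable_exp_neg_nat hδ)
        (fun n => by positivity) (fun k => by positivity)
    have hg2s : Summable g2 :=
      Summable.mul_of_nonneg
        ((summable_poly_exp_neg_sq_int (by positivity : (0:ℝ) < (t/2-1)*b^2) N
          (by norm_num : (0:ℝ) ≤ 1) (by positivity : (0:ℝ) ≤ 2*b^2)).mul_left _)
        (summable_exp_neg_nat one_pos)
        (fun n => by positivity) (fun k => by positivity)
    have hg3s : Summable g3 :=
      Summable.mul_of_nonneg
        ((summable_exp_neg_sq_int hb2).mul_left _)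
        (summable_exp_neg_nat ht1)
        (fun n => by positivity) (fun k => by positivity)
    refine Summable.of_nonneg_of_le ?_ ?_ ((hg1s.add hg2s).add hg3s)
    · rintro ⟨n, k⟩
      have hLnn := (Lag_pos' k (hu0 n)).le
      exact mul_nonneg (mul_nonneg (Real.exp_nonneg _) (Real.exp_nonneg _)) hLnn
    · rintro ⟨n, k⟩
      have hg1nn : 0 ≤ g1 (n, k) := by simp only [hg1]; positivity
      have hg2nn : 0 ≤ g2 (n, k) := by simp only [hg2]; positivity
      have hg3nn : 0 ≤ g3 (n, k) := by simp only [hg3]; positivity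
      have hu : (b*(n:ℝ))^2 = b^2 * (n:ℝ)^2 := by ring
      have hk0 : (0:ℝ) ≤ (k:ℝ) := Nat.cast_nonneg k
      by_cases hgood : (N:ℤ) ≤ |n| ∧ N ≤ k
      · -- good region : bounded by g1
        have hle : ((b * (n:ℝ))^2 + Real.log (Lag k (-2 * (b * (n:ℝ))^2))) /
            ((b * (n:ℝ))^2/2 + (k:ℝ) + 1/2) ≤ s :=
          le_csSup (hbdd N) ⟨n, k, hgood.1, hgood.2, rfl⟩
        have hnum : (b * (n:ℝ))^2 + Real.log (Lag k (-2 * (b * (n:ℝ))^2)) ≤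
            s * ((b * (n:ℝ))^2/2 + (k:ℝ) + 1/2) := (div_le_iff₀ (hden n k)).mp hle
        have key : Real.exp (-t * ((b * (n:ℝ))^2/2 + (k:ℝ))) * Real.exp ((b * (n:ℝ))^2) *
            Lag k (-2 * (b * (n:ℝ))^2) ≤ g1 (n, k) := by
          rw [f_eq b t n k]
          simp only [hg1]
          have hg1eq : (Real.exp (s/2) * Real.exp (-((t-s)*b^2/2 * (n:ℝ)^2))) *
              Real.exp (-((t-s) * (k:ℝ)))
              = Real.exp (s/2 - (t-s)*b^2/2 * (n:ℝ)^2 - (t-s) * (k:ℝ)) := by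
            rw [← Real.exp_add, ← Real.exp_add]
            all_goals congr 1
            all_goals ring
          rw [hg1eq]
          apply Real.exp_le_exp.mpr
          nlinarith [hnum, hu]
        calc Real.exp (-t * ((b * (n:ℝ))^2/2 + (k:ℝ))) * Real.exp ((b * (n:ℝ))^2) *
              Lag k (-2 * (b * (n:ℝ))^2) ≤ g1 (n, k) := key
          _ ≤ g1 (n, k) + g2 (n, k) + g3 (n, k) := by linarith
      · rw [not_and_or, not_le, not_le] at hgood
        rcases hgood with hn | hk
        · -- |n| < N : bounded by g3
          have hn2 : (n:ℝ)^2 ≤ (N:ℝ)^2 := by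
            obtain ⟨h1, h2⟩ := abs_lt.mp hn
            have := sq_le_sq' h1.le h2.le
            exact_mod_cast this
          have hloglag := logLag_le k (hu0 n)
          have key : Real.exp (-t * ((b * (n:ℝ))^2/2 + (k:ℝ))) * Real.exp ((b * (n:ℝ))^2) *
              Lag k (-2 * (b * (n:ℝ))^2) ≤ g3 (n, k) := by
            rw [f_eq b t n k]
            simp only [hg3]
            have hg3eq : (Real.exp (4*b^2*(N:ℝ)^2) * Real.exp (-(b^2 * (n:ℝ)^2))) *
                Real.exp (-((t-1) * (k:ℝ)))
                = Real.exp (4*b^2*(N:ℝ)^2 - b^2 * (n:ℝ)^2 - (t-1) * (k:ℝ)) := by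
              rw [← Real.exp_add, ← Real.exp_add]
              all_goals congr 1
              all_goals ring
            rw [hg3eq]
            apply Real.exp_le_exp.mpr
            have h3 : 3 * (b*(n:ℝ))^2 + b^2*(n:ℝ)^2 ≤ 4*b^2*(N:ℝ)^2 := by nlinarith
            nlinarith [hloglag, mul_nonneg (hu0 n) ht0.le,
              mul_nonneg ht0.le (mul_nonneg (hu0 n) (by norm_num : (0:ℝ) ≤ 1/2))]
          calc Real.exp (-t * ((b * (n:ℝ))^2/2 + (k:ℝ))) * Real.exp ((b * (n:ℝ))^2) *
                Lag k (-2 * (b * (n:ℝ))^2) ≤ g3 (n, k) := key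
            _ ≤ g1 (n, k) + g2 (n, k) + g3 (n, k) := by linarith
        · -- k < N : bounded by g2
          have hLp := Lag_le_poly' k (hu0 n)
          have hexp : Real.exp (-t * ((b * (n:ℝ))^2/2 + (k:ℝ))) * Real.exp ((b * (n:ℝ))^2)
              = Real.exp (-((t/2-1)*b^2 * (n:ℝ)^2)) * Real.exp (-(t * (k:ℝ))) := by
            rw [← Real.exp_add, ← Real.exp_add]; congr 1; ring
          have key : Real.exp (-t * ((b * (n:ℝ))^2/2 + (k:ℝ))) * Real.exp ((b * (n:ℝ))^2) *
              Lag k (-2 * (b * (n:ℝ))^2) ≤ g2 (n, k) := by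
            calc Real.exp (-t * ((b * (n:ℝ))^2/2 + (k:ℝ))) * Real.exp ((b * (n:ℝ))^2) *
                  Lag k (-2 * (b * (n:ℝ))^2)
                ≤ Real.exp (-t * ((b * (n:ℝ))^2/2 + (k:ℝ))) * Real.exp ((b * (n:ℝ))^2) *
                  (((k:ℝ)+1) * 2^k * (1 + 2*(b * (n:ℝ))^2)^k) := by
                  apply mul_le_mul_of_nonneg_left hLp (by positivity)
              _ = (((k:ℝ)+1) * 2^k * ((1 + 2*b^2 * (n:ℝ)^2)^k *
                    Real.exp (-((t/2-1)*b^2 * (n:ℝ)^2)))) * Real.exp (-(t * (k:ℝ))) := by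
                  rw [hexp, hu]; ring
              _ ≤ (((N:ℝ)+1) * 2^N * ((1 + 2*b^2 * (n:ℝ)^2)^N *
                    Real.exp (-((t/2-1)*b^2 * (n:ℝ)^2)))) * Real.exp (-(1 * (k:ℝ))) := by
                  have hb1 : (1:ℝ) ≤ 1 + 2*b^2 * (n:ℝ)^2 := by nlinarith [sq_nonneg (n:ℝ)]
                  have hkN : (k:ℝ) + 1 ≤ (N:ℝ) + 1 := by
                    have : (k:ℝ) ≤ (N:ℝ) := by exact_mod_cast hk.le
                    linarith
                  have e1 : Real.exp (-(t * (k:ℝ))) ≤ Real.exp (-(1 * (k:ℝ))) := by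
                    apply Real.exp_le_exp.mpr
                    nlinarith
                  apply mul_le_mul _ e1 (Real.exp_nonneg _) (by positivity)
                  have p1 : ((1:ℝ) + 2*b^2 * (n:ℝ)^2)^k ≤ (1 + 2*b^2 * (n:ℝ)^2)^N :=
                    pow_le_pow_right₀ hb1 hk.le
                  have p2 : ((2:ℝ))^k ≤ (2:ℝ)^N := pow_le_pow_right₀ one_le_two hk.le
                  have hEnn : (0:ℝ) ≤ Real.exp (-((t/2-1)*b^2 * (n:ℝ)^2)) := Real.exp_nonneg _
                  apply mul_le_mul
                  · apply mul_le_mul hkN p2 (by positivity) (by positivity)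
                  · exact mul_le_mul_of_nonneg_right p1 hEnn
                  · positivity
                  · positivity
              _ = g2 (n, k) := by simp only [hg2]
          calc Real.exp (-t * ((b * (n:ℝ))^2/2 + (k:ℝ))) * Real.exp ((b * (n:ℝ))^2) *
                Lag k (-2 * (b * (n:ℝ))^2) ≤ g2 (n, k) := key
            _ ≤ g1 (n, k) + g2 (n, k) + g3 (n, k) := by linarith
  -- lower bound : any admissible t is ≥ L
  have hlower : ∀ t : ℝ, (0 < t ∧ Summable (fun p : ℤ × ℕ =>
      Real.exp (-t * ((b * (p.1 : ℝ)) ^ 2 / 2 + (p.2 : ℝ))) *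
        Real.exp ((b * (p.1 : ℝ)) ^ 2) * Lag p.2 (-2 * (b * (p.1 : ℝ)) ^ 2))) → L ≤ t := by
    rintro t ⟨ht0, hsum⟩
    by_contra hlt
    push_neg at hlt
    set F : ℤ × ℕ → ℝ := fun p =>
      Real.exp (-t * ((b * (p.1 : ℝ)) ^ 2 / 2 + (p.2 : ℝ))) *
        Real.exp ((b * (p.1 : ℝ)) ^ 2) * Lag p.2 (-2 * (b * (p.1 : ℝ)) ^ 2) with hF
    have hfin : {p : ℤ × ℕ | Real.exp (t/2) ≤ F p}.Finite := by
      have h1 := hsum.tendsto_cofinite_zero (Iio_mem_nhds (Real.exp_pos (t/2)))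
      rw [Filter.mem_map, Filter.mem_cofinite] at h1
      convert h1 using 1
      ext p
      simp [not_lt]
    obtain ⟨B, hB⟩ := (hfin.image fun p => |p.1|).bddAbove
    set N : ℕ := (B+1).toNat with hNdef
    have hNB : B < (N:ℤ) := by
      have := Int.self_le_toNat (B+1); omega
    have ht' : t < sSup (Sset N) := lt_of_lt_of_le hlt (ciInf_le hbb N)
    obtain ⟨r, hrmem, hr⟩ := exists_lt_of_lt_csSup (hne N) ht'
    obtain ⟨n, k, hn, hk, rfl⟩ := hrmem
    have hnum : t * ((b * (n:ℝ))^2/2 + (k:ℝ) + 1/2) <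
        (b * (n:ℝ))^2 + Real.log (Lag k (-2 * (b * (n:ℝ))^2)) := (lt_div_iff₀ (hden n k)).mp hr
    have hfp : Real.exp (t/2) ≤ F (n, k) := by
      simp only [hF]
      rw [f_eq b t n k]
      apply Real.exp_le_exp.mpr
      linarith
    have hmem : |n| ∈ (fun p : ℤ × ℕ => |p.1|) '' {p : ℤ × ℕ | Real.exp (t/2) ≤ F p} :=
      ⟨(n, k), hfp, rfl⟩
    have := hB hmem
    omega
  -- conclude : sigma b = L
  have hTne : Set.Nonempty {t : ℝ | 0 < t ∧ Summable (fun p : ℤ × ℕ =>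
      Real.exp (-t * ((b * (p.1 : ℝ)) ^ 2 / 2 + (p.2 : ℝ))) *
        Real.exp ((b * (p.1 : ℝ)) ^ 2) * Lag p.2 (-2 * (b * (p.1 : ℝ)) ^ 2))} :=
    ⟨L+1, hmemT (L+1) (by linarith)⟩
  have h1 : L ≤ sigma b := le_csInf hTne (fun t ht => hlower t ht)
  have h2 : sigma b ≤ L := by
    apply le_of_forall_pos_le_add
    intro ε hε
    exact csInf_le ⟨L, fun t ht => hlower t ht⟩ (hmemT (L+ε) (by linarith))
  have hsig : sigma b = L := le_antisymm h2 h1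
  rw [hsig]
  exact htend
end

section
/- Let b be a nonzero real number and define σ(b) = inf{ t > 0 : Σ_{n ∈ ℤ} Σ_{k ∈ ℕ} exp(−t·((bn)²/2 + k))·exp((bn)²)·L_k(−2(bn)²) < ∞ }. Then σ(b) = τ. -/
/-!
For fixed `n`, write `s = (b n)²`. Summing `y^m/m! · C(k,m) · z^k` over `(k, m)` in both orders
gives the Laguerre generating function `∑ₖ Lₖ(-y) zᵏ = exp (y z / (1 - z)) / (1 - z)`, and with
`y = 2s`, `z = e^{-t}` the inner sum over `k` becomes `exp (s κ(t)) / (1 - e^{-t})`, where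
`κ(t) = coth (t/2) - t/2`. The outer sum over `n` is then the theta series `∑ₙ exp (b² κ(t) n²)`,
which converges iff `κ(t) < 0`. Since `κ` is strictly decreasing on `(0, ∞)` and `κ(τ) = 0`, the
admissible `t` form `(τ, ∞)`, whose infimum is `τ`.
-/

open Real

theorem hasSum_prod_of_fiberwise_of_nonneg {α β : Type*} {f : α × β → ℝ} (hf : 0 ≤ f)
    {g : α → ℝ} {a : ℝ} (hg : ∀ x, HasSum (fun y ↦ f (x, y)) (g x)) (ha : HasSum g a) :
    HasSum f a := by
  have hsum : Summable f := (summable_prod_of_nonneg hf).mpr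
    ⟨fun x ↦ (hg x).summable, ha.summable.congr fun x ↦ (hg x).tsum_eq.symm⟩
  convert hsum.hasSum
  rw [hsum.tsum_prod' fun x ↦ (hg x).summable, tsum_congr fun x ↦ (hg x).tsum_eq, ha.tsum_eq]

lemma hasSum_choose_mul_pow_of_lt_one (m : ℕ) {z : ℝ} (hz₀ : 0 ≤ z) (hz₁ : z < 1) :
    HasSum (fun k : ℕ ↦ (k.choose m : ℝ) * z ^ k) (z ^ m / (1 - z) ^ (m + 1)) := by
  have hz : ‖z‖ < 1 := by rwa [norm_of_nonneg hz₀]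
  have hshift := (hasSum_choose_mul_geometric_of_norm_lt_one' m hz).mul_left (z ^ m)
  rw [Ring.inverse_eq_inv', inv_pow, ← div_eq_mul_inv] at hshift
  refine ((add_left_injective m).hasSum_iff fun k hk ↦ ?_).mp ?_
  · have hkm : k < m := lt_of_not_ge fun h ↦ hk ⟨k - m, Nat.sub_add_cancel h⟩
    simp [Nat.choose_eq_zero_of_lt hkm]
  · convert! hshift using 2 with n
    simp [pow_add]
    ring

lemma summable_int_exp_mul_sq_iff {c : ℝ} : Summable (fun n : ℤ ↦ exp (c * n ^ 2)) ↔ c < 0 := by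
  have h (n : ℤ) : exp (c * n ^ 2) = ‖jacobiTheta₂_term n 0 (Complex.I * (-c / π : ℝ))‖ := by
    rw [norm_jacobiTheta₂_term]
    congr 1
    simp
    field_simp
  simp_rw [h, summable_norm_iff, summable_jacobiTheta₂_term_iff]
  simp [div_pos_iff_of_pos_right pi_pos]

lemma Lag_nonneg (k : ℕ) {x : ℝ} (hx : x ≤ 0) : 0 ≤ Lag k x :=
  Finset.sum_nonneg fun m _ ↦ by
    have : 0 ≤ -x := neg_nonneg.mpr hx
    positivity

theorem hasSum_Lag_neg_mul_pow {y z : ℝ} (hy : 0 ≤ y) (hz₀ : 0 ≤ z) (hz₁ : z < 1) :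
    HasSum (fun k ↦ Lag k (-y) * z ^ k) (exp (y * z / (1 - z)) / (1 - z)) := by
  set h : ℕ × ℕ → ℝ := fun p ↦ y ^ p.2 / p.2.factorial * (p.1.choose p.2 * z ^ p.1)
  have h_nonneg : 0 ≤ h ∘ Equiv.prodComm ℕ ℕ := fun p ↦ by
    simp only [Pi.zero_apply, Function.comp_apply, h]
    positivity
  have hrow (k : ℕ) : HasSum (fun m ↦ h (k, m)) (Lag k (-y) * z ^ k) := by
    have hzero : ∀ m ∉ Finset.range (k + 1), h (k, m) = 0 := fun m hm ↦ by
      simp [h, Nat.choose_eq_zero_of_lt (by simpa using hm : k < m)]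
    convert! (hasSum_sum_of_ne_finset_zero hzero : HasSum _ _) using 1
    simp only [Lag, neg_neg, Finset.sum_mul, h]
    exact Finset.sum_congr rfl fun m _ ↦ by ring
  have hcol (m : ℕ) :
      HasSum (fun k ↦ h (k, m)) ((y * z / (1 - z)) ^ m / m.factorial / (1 - z)) := by
    convert! (hasSum_choose_mul_pow_of_lt_one m hz₀ hz₁).mul_left (y ^ m / m.factorial) using 1
    generalize 1 - z = w
    ring
  have hexp := (exp_eq_exp_ℝ ▸ NormedSpace.expSeries_div_hasSum_exp (y * z / (1 - z))).div_const
    (1 - z)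
  have hh : HasSum h (exp (y * z / (1 - z)) / (1 - z)) :=
    (Equiv.prodComm ℕ ℕ).hasSum_iff.mp (hasSum_prod_of_fiberwise_of_nonneg h_nonneg hcol hexp)
  exact hh.prod_fiberwise hrow

noncomputable def gaussExponent (t : ℝ) : ℝ := 1 + 2 / (exp t - 1) - t / 2

lemma gaussExponent_eq_cosh_div_sinh {t : ℝ} (ht : t ≠ 0) :
    gaussExponent t = cosh (t / 2) / sinh (t / 2) - t / 2 := by
  have h1 : exp t - 1 ≠ 0 := by simpa [sub_eq_zero] using ht
  have h2 : sinh (t / 2) ≠ 0 := by simpa using ht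
  rw [gaussExponent, sub_left_inj, eq_div_iff h2, cosh_eq, sinh_eq]
  have hsq : exp t = exp (t / 2) ^ 2 := by rw [← exp_nat_mul]; ring_nf
  have hinv : exp (t / 2) * exp (-(t / 2)) = 1 := by rw [← exp_add]; simp
  field_simp
  rw [hsq]
  linear_combination (-2 * exp (t / 2)) * hinv

lemma gaussExponent_strictAntiOn : StrictAntiOn gaussExponent (Set.Ioi 0) := by
  intro s hs t ht hst
  have hs1 : 0 < exp s - 1 := by simpa using hs
  have : 2 / (exp t - 1) < 2 / (exp s - 1) := by gcongr
  simp only [gaussExponent]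
  linarith

lemma hasSum_exp_mul_Lag {t s : ℝ} (ht : 0 < t) (hs : 0 ≤ s) :
    HasSum (fun k : ℕ ↦ exp (-t * (s / 2 + k)) * exp s * Lag k (-2 * s))
      (exp (s * gaussExponent t) / (1 - exp (-t))) := by
  have hz₁ : exp (-t) < 1 := exp_lt_one_iff.mpr (neg_lt_zero.mpr ht)
  have hgen := (hasSum_Lag_neg_mul_pow (by positivity : 0 ≤ 2 * s) (exp_pos _).le hz₁).mul_left
    (exp (-t * s / 2) * exp s)
  convert! hgen using 1
  · ext k
    have hsplit : exp (-t * (s / 2 + k)) = exp (-t * s / 2) * exp (-t) ^ k := by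
      rw [← exp_nat_mul, ← exp_add]
      ring_nf
    rw [hsplit, show (-2 : ℝ) * s = -(2 * s) by ring]
    ring
  · have h1 : exp t - 1 ≠ 0 := by simpa [sub_eq_zero] using ht.ne'
    have hgeom : exp (-t) / (1 - exp (-t)) = 1 / (exp t - 1) := by
      rw [exp_neg]
      field_simp
    rw [mul_div_assoc', ← exp_add, ← exp_add]
    congr 2
    rw [mul_div_assoc (2 * s), hgeom, gaussExponent]
    ring

noncomputable def sigmaSummand (b t : ℝ) (p : ℤ × ℕ) : ℝ :=
  exp (-t * ((b * (p.1 : ℝ)) ^ 2 / 2 + (p.2 : ℝ))) *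
    exp ((b * (p.1 : ℝ)) ^ 2) * Lag p.2 (-2 * (b * (p.1 : ℝ)) ^ 2)

lemma summable_sigmaSummand_iff {b t : ℝ} (hb : b ≠ 0) (ht : 0 < t) :
    Summable (sigmaSummand b t) ↔ gaussExponent t < 0 := by
  have hrow (n : ℤ) := hasSum_exp_mul_Lag ht (sq_nonneg (b * n))
  have hnonneg : 0 ≤ sigmaSummand b t := fun p ↦
    mul_nonneg (by positivity) (Lag_nonneg _ (by nlinarith [sq_nonneg (b * p.1)]))
  have hexp : 1 - exp (-t) ≠ 0 := (sub_pos.mpr (exp_lt_one_iff.mpr (neg_lt_zero.mpr ht))).ne'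
  calc Summable (sigmaSummand b t)
      ↔ Summable (fun n : ℤ ↦ exp ((b * n) ^ 2 * gaussExponent t) / (1 - exp (-t))) := by
        rw [summable_prod_of_nonneg hnonneg]
        exact ⟨fun h ↦ h.2.congr fun n ↦ (hrow n).tsum_eq,
          fun h ↦ ⟨fun n ↦ (hrow n).summable, h.congr fun n ↦ (hrow n).tsum_eq.symm⟩⟩
    _ ↔ Summable (fun n : ℤ ↦ exp (b ^ 2 * gaussExponent t * n ^ 2)) := by
        rw [summable_div_const_iff hexp]
        simp_rw [mul_pow, mul_right_comm _ _ (gaussExponent t)]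
    _ ↔ gaussExponent t < 0 := by
        rw [summable_int_exp_mul_sq_iff]
        exact ⟨fun h ↦ neg_of_mul_neg_right h (sq_nonneg b), mul_neg_of_pos_of_neg (by positivity)⟩

/-- For every `b ≠ 0`, `σ(b) = τ`, where `τ` is the unique positive solution of
`coth (τ/2) = τ/2`. -/
theorem sigma_eq_tau (b : ℝ) (hb : b ≠ 0) (τ : ℝ) (hτpos : 0 < τ)
    (hτ : Real.cosh (τ / 2) / Real.sinh (τ / 2) = τ / 2) :
    sigma b = τ := by
  have hτ₀ : gaussExponent τ = 0 := by
    rw [gaussExponent_eq_cosh_div_sinh hτpos.ne', hτ, sub_self]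
  have hset : {t : ℝ | 0 < t ∧ Summable (sigmaSummand b t)} = Set.Ioi τ := by
    ext t
    constructor
    · rintro ⟨ht, hsum⟩
      have hneg := (summable_sigmaSummand_iff hb ht).mp hsum
      exact (gaussExponent_strictAntiOn.lt_iff_gt ht hτpos).mp (hτ₀ ▸ hneg)
    · intro hτt
      have ht : 0 < t := hτpos.trans hτt
      exact ⟨ht, (summable_sigmaSummand_iff hb ht).mpr
        (hτ₀ ▸ gaussExponent_strictAntiOn hτpos ht hτt)⟩
  exact (congrArg sInf hset).trans csInf_Ioi
end

section
/- For every γ ∈ ℝ and every k ∈ ℕ, (1/(π·k!)) · ∬_{ℝ²} ((x₁ + γ)² + x₂²)^k · e^{−x₁² − x₂²} dx₁ dx₂ = L_k(−γ²). -/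
/-!
Identify `ℝ²` with `ℂ`, so that the integrand is `|z + γ|^(2k) e^{-|z|²}`, and expand
`(z + γ)^k (conj z + γ)^k` binomially. In polar coordinates the monomial `z^a (conj z)^b` carries
the angular factor `e^{i(a-b)θ}`, so the monomials are orthogonal for the Gaussian weight, while
`∫ |z|^(2a) e^{-|z|²} = π a!`. The integral is therefore `π ∑ₐ C(k,a)² a! γ^(2(k-a))`, which is
`π k! L_k(-γ²)` after the substitution `a ↦ k - a`.
-/

open MeasureTheory

open Set Real ComplexConjugate Finset
open Complex (I)
open scoped Nat

theorem integral_Ioo_neg_pi_pi_cexp_int_mul_I_eq_zero {n : ℤ} (hn : n ≠ 0) :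
    ∫ θ in Ioo (-π) π, Complex.exp (n * I * θ) = 0 := by
  have hc : (n : ℂ) * I ≠ 0 := mul_ne_zero (Int.cast_ne_zero.mpr hn) Complex.I_ne_zero
  have hperiodic : Complex.exp (n * I * π) = Complex.exp (n * I * ↑(-π)) :=
    Complex.exp_eq_exp_iff_exists_int.mpr ⟨n, by push_cast; ring⟩
  rw [← integral_Ioc_eq_integral_Ioo, ← intervalIntegral.integral_of_le (by linarith [pi_pos]),
    integral_exp_mul_complex hc, hperiodic, sub_self, zero_div]

theorem Complex.polarCoord_symm_pow_mul_conj_pow (a b : ℕ) (p : ℝ × ℝ) :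
    Complex.polarCoord.symm p ^ a * conj (Complex.polarCoord.symm p) ^ b =
      (p.1 ^ (a + b) : ℝ) * Complex.exp (((a : ℤ) - b : ℤ) * I * p.2) := by
  have hpolar : Complex.polarCoord.symm p = p.1 * Complex.exp (p.2 * I) := by
    rw [Complex.polarCoord_symm_apply, Complex.exp_mul_I, ← Complex.ofReal_cos,
      ← Complex.ofReal_sin]
  have hconj : conj (Complex.exp (p.2 * I)) = Complex.exp (-(p.2 * I)) := by
    rw [← Complex.exp_conj, map_mul, Complex.conj_ofReal, Complex.conj_I, mul_neg]
  rw [hpolar, map_mul, Complex.conj_ofReal, hconj, mul_pow, mul_pow, ← Complex.exp_nat_mul,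
    ← Complex.exp_nat_mul, mul_mul_mul_comm, ← pow_add, ← Complex.exp_add]
  push_cast
  ring_nf

theorem integral_pow_mul_conj_pow_mul_comp_norm_eq_zero {a b : ℕ} (hab : a ≠ b) (g : ℝ → ℂ) :
    ∫ z : ℂ, z ^ a * conj z ^ b * g ‖z‖ = 0 := by
  have hsplit : ∀ p : ℝ × ℝ, p.1 • (Complex.polarCoord.symm p ^ a *
      conj (Complex.polarCoord.symm p) ^ b * g ‖Complex.polarCoord.symm p‖) =
      (p.1 ^ (a + b + 1) * g |p.1|) * Complex.exp (((a : ℤ) - b : ℤ) * I * p.2) := by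
    intro p
    rw [Complex.polarCoord_symm_pow_mul_conj_pow, Complex.norm_polarCoord_symm, Complex.real_smul]
    push_cast
    ring
  have hn : (a : ℤ) - b ≠ 0 := sub_ne_zero.mpr (by exact_mod_cast hab)
  rw [← Complex.integral_comp_polarCoord_symm, polarCoord_target]
  simp_rw [hsplit]
  rw [Measure.volume_eq_prod, setIntegral_prod_mul (fun r : ℝ => (r : ℂ) ^ (a + b + 1) * g |r|)
    (fun θ : ℝ => Complex.exp (((a : ℤ) - b : ℤ) * I * θ)),
    integral_Ioo_neg_pi_pi_cexp_int_mul_I_eq_zero hn, mul_zero]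

theorem integrable_norm_pow_mul_exp_neg_norm_sq (n : ℕ) :
    Integrable fun z : ℂ => ‖z‖ ^ n * Real.exp (-‖z‖ ^ 2) := by
  refine (integrable_fun_norm_addHaar volume (f := fun r => r ^ n * Real.exp (-r ^ 2))).mpr ?_
  have h := integrableOn_rpow_mul_exp_neg_mul_sq (b := 1) one_pos (s := (n + 1 : ℕ))
    (neg_one_lt_zero.trans_le (Nat.cast_nonneg _))
  simp only [rpow_natCast, neg_one_mul] at h
  refine h.congr_fun (fun r _ => ?_) measurableSet_Ioi
  simp only [Complex.finrank_real_complex, smul_eq_mul]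
  ring

theorem integrable_pow_mul_conj_pow_mul_exp_neg_norm_sq (a b : ℕ) :
    Integrable fun z : ℂ => z ^ a * conj z ^ b * Real.exp (-‖z‖ ^ 2) := by
  refine (integrable_norm_pow_mul_exp_neg_norm_sq (a + b)).mono' (by fun_prop) (.of_forall ?_)
  intro z
  simp only [norm_mul, norm_pow, Complex.norm_conj, Complex.norm_real, Real.norm_eq_abs,
    abs_of_pos (Real.exp_pos _), pow_add, le_refl]

theorem integral_pow_mul_conj_pow_mul_exp_neg_norm_sq (a b : ℕ) :
    ∫ z : ℂ, z ^ a * conj z ^ b * Real.exp (-‖z‖ ^ 2) = if a = b then (π * a ! : ℂ) else 0 := by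
  split_ifs with hab
  · subst hab
    have hnorm : ∀ z : ℂ, z ^ a * conj z ^ a = ((‖z‖ ^ (2 * a) : ℝ) : ℂ) := fun z => by
      rw [← mul_pow, Complex.mul_conj, Complex.normSq_eq_norm_sq, pow_mul]
      push_cast
      rfl
    have h := Complex.integral_rpow_mul_exp_neg_rpow (p := 2) (q := 2 * a) one_le_two
      (by linarith [(Nat.cast_nonneg a : (0 : ℝ) ≤ a)])
    rw [show (2 * a : ℝ) = (2 * a : ℕ) by push_cast; ring,
      show ((2 * a : ℕ) + 2 : ℝ) / 2 = a + 1 by push_cast; ring,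
      Real.Gamma_nat_eq_factorial] at h
    simp only [rpow_natCast, rpow_two] at h
    simp_rw [hnorm, ← Complex.ofReal_mul, integral_complex_ofReal, h]
    push_cast
    ring
  · exact integral_pow_mul_conj_pow_mul_comp_norm_eq_zero hab fun r => (Real.exp (-r ^ 2) : ℂ)

theorem integral_norm_add_pow_mul_exp_neg_norm_sq (w : ℂ) (k : ℕ) :
    ∫ z : ℂ, ‖z + w‖ ^ (2 * k) * Real.exp (-‖z‖ ^ 2) =
      π * ∑ a ∈ range (k + 1), (k.choose a : ℝ) ^ 2 * a ! * (‖w‖ ^ 2) ^ (k - a) := by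
  have hexpand : ∀ z : ℂ, ((‖z + w‖ ^ (2 * k) * Real.exp (-‖z‖ ^ 2) : ℝ) : ℂ) =
      ∑ a ∈ range (k + 1), ∑ b ∈ range (k + 1),
        (k.choose a * w ^ (k - a) * (k.choose b * conj w ^ (k - b))) *
          (z ^ a * conj z ^ b * Real.exp (-‖z‖ ^ 2)) := fun z => by
    rw [Complex.ofReal_mul, Complex.ofReal_pow, pow_mul, ← Complex.mul_conj', mul_pow, map_add,
      add_pow, add_pow, sum_mul_sum, sum_mul]
    refine sum_congr rfl fun a _ => ?_
    rw [sum_mul]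
    exact sum_congr rfl fun b _ => by ring
  have hintegrable : ∀ (a b : ℕ) (c : ℂ),
      Integrable fun z : ℂ => c * (z ^ a * conj z ^ b * Real.exp (-‖z‖ ^ 2)) := fun a b c =>
    (integrable_pow_mul_conj_pow_mul_exp_neg_norm_sq a b).const_mul c
  have hdiag : ∀ a ∈ range (k + 1), ∫ z : ℂ, ∑ b ∈ range (k + 1),
      (k.choose a * w ^ (k - a) * (k.choose b * conj w ^ (k - b))) *
        (z ^ a * conj z ^ b * Real.exp (-‖z‖ ^ 2)) =
      ((k.choose a : ℝ) ^ 2 * a ! * (‖w‖ ^ 2) ^ (k - a) * π : ℝ) := fun a ha => by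
    simp_rw [integral_finsetSum _ fun b _ => hintegrable a b _, integral_const_mul,
      integral_pow_mul_conj_pow_mul_exp_neg_norm_sq, mul_ite, mul_zero, sum_ite_eq, if_pos ha]
    have hw : w ^ (k - a) * conj w ^ (k - a) = ((‖w‖ : ℂ) ^ 2) ^ (k - a) := by
      rw [← mul_pow, Complex.mul_conj']
    push_cast
    linear_combination ((k.choose a : ℂ) ^ 2 * π * a !) * hw
  apply Complex.ofReal_injective
  simp_rw [← integral_complex_ofReal, hexpand]
  rw [integral_finsetSum _ fun a _ => integrable_finsetSum _ fun b _ => hintegrable a b _,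
    sum_congr rfl hdiag, ← Complex.ofReal_sum, mul_comm, sum_mul]

theorem sum_choose_sq_mul_factorial_mul_pow_eq_factorial_mul_Lag (k : ℕ) (t : ℝ) :
    ∑ a ∈ range (k + 1), (k.choose a : ℝ) ^ 2 * a ! * t ^ (k - a) = k ! * Lag k (-t) := by
  rw [Lag, ← sum_range_reflect, mul_sum]
  refine sum_congr rfl fun m hm => ?_
  have hmk : m ≤ k := Nat.lt_succ_iff.mp (mem_range.mp hm)
  have hfact : (k.choose m : ℝ) * m ! * (k - m)! = k ! := by
    exact_mod_cast Nat.choose_mul_factorial_mul_factorial hmk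
  rw [show k + 1 - 1 - m = k - m by omega, show k - (k - m) = m by omega, Nat.choose_symm hmk,
    neg_neg, ← hfact]
  field_simp

/-- `(1/(π k!)) ∬ ((x₁ + γ)² + x₂²)^k e^{-x₁²-x₂²} dx₁ dx₂ = L_k(-γ²)`. -/
theorem fock_integral_eq_laguerre (γ : ℝ) (k : ℕ) :
    (1 / (Real.pi * (k.factorial : ℝ))) *
      (∫ p : ℝ × ℝ, ((p.1 + γ) ^ 2 + p.2 ^ 2) ^ k * Real.exp (-p.1 ^ 2 - p.2 ^ 2)) =
      Lag k (-γ ^ 2) := by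
  have hcomplex : ∫ p : ℝ × ℝ, ((p.1 + γ) ^ 2 + p.2 ^ 2) ^ k * Real.exp (-p.1 ^ 2 - p.2 ^ 2) =
      ∫ z : ℂ, ‖z + γ‖ ^ (2 * k) * Real.exp (-‖z‖ ^ 2) := by
    rw [← Complex.volume_preserving_equiv_real_prod.integral_comp']
    refine integral_congr_ae (.of_forall fun z => ?_)
    simp only [Complex.measurableEquivRealProd_apply, Complex.sq_norm, Complex.normSq_apply,
      pow_mul, Complex.add_re, Complex.ofReal_re, Complex.add_im, Complex.ofReal_im, add_zero]
    ring_nf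
  rw [hcomplex, integral_norm_add_pow_mul_exp_neg_norm_sq, Complex.norm_real, Real.norm_eq_abs,
    sq_abs, sum_choose_sq_mul_factorial_mul_pow_eq_factorial_mul_Lag]
  field_simp
end

section
/- For every γ ∈ ℝ and every k ∈ ℕ, L_k(−γ²) ≤ cosh(2γ√k). -/
lemma central_le_four_pow (m : ℕ) : (2 * m).choose m ≤ 4 ^ m := by
  calc (2 * m).choose m ≤ ∑ i ∈ Finset.range (2 * m + 1), (2 * m).choose i :=
        Finset.single_le_sum (f := fun i => (2 * m).choose i) (fun _ _ => Nat.zero_le _)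
          (Finset.mem_range.2 (by omega))
    _ = 2 ^ (2 * m) := Nat.sum_range_choose (2 * m)
    _ = 4 ^ m := by rw [pow_mul]; norm_num

lemma key_nat (k m : ℕ) : k.choose m * (2 * m).factorial ≤ (4 * k) ^ m * m.factorial := by
  have h1 : (2 * m).factorial = (2 * m).choose m * m.factorial * m.factorial := by
    have h := Nat.choose_mul_factorial_mul_factorial (n := 2 * m) (k := m) (by omega)
    have hm : 2 * m - m = m := by omega
    rw [hm] at h
    rw [← h]
  have h2 : k.choose m * m.factorial ≤ k ^ m := by
    have := Nat.descFactorial_le_pow k m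
    rwa [Nat.descFactorial_eq_factorial_mul_choose, mul_comm] at this
  calc k.choose m * (2 * m).factorial
      = k.choose m * ((2 * m).choose m * m.factorial * m.factorial) := by rw [h1]
    _ ≤ k.choose m * (4 ^ m * m.factorial * m.factorial) := by
        have := central_le_four_pow m
        exact Nat.mul_le_mul_left _ (by
          exact Nat.mul_le_mul_right _ (Nat.mul_le_mul_right _ this))
    _ = (k.choose m * m.factorial) * 4 ^ m * m.factorial := by ring
    _ ≤ k ^ m * 4 ^ m * m.factorial := by
        exact Nat.mul_le_mul_right _ (Nat.mul_le_mul_right _ h2)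
    _ = (4 * k) ^ m * m.factorial := by rw [mul_pow]; ring

/-- `L_k(-γ²) ≤ cosh (2 γ √k)` for every real `γ` and every `k ∈ ℕ`. -/
theorem laguerre_le_cosh (γ : ℝ) (k : ℕ) :
    Lag k (-γ ^ 2) ≤ Real.cosh (2 * γ * Real.sqrt k) := by
  have hs := Real.hasSum_cosh (2 * γ * Real.sqrt k)
  have hsq : Real.sqrt k ^ 2 = (k : ℝ) := Real.sq_sqrt (Nat.cast_nonneg k)
  have hbase : (2 * γ * Real.sqrt k) ^ 2 = 4 * k * γ ^ 2 := by
    rw [mul_pow, mul_pow, hsq]; ring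
  calc Lag k (-γ ^ 2)
      ≤ ∑ m ∈ Finset.range (k + 1),
          (2 * γ * Real.sqrt k) ^ (2 * m) / ((2 * m).factorial : ℝ) := by
        rw [Lag]
        apply Finset.sum_le_sum
        intro m _
        rw [neg_neg, pow_mul, hbase, mul_pow]
        have hγ : (0 : ℝ) ≤ (γ ^ 2) ^ m := by positivity
        have hkey : (1 / (m.factorial : ℝ)) * (k.choose m : ℝ)
            ≤ (4 * (k : ℝ)) ^ m / ((2 * m).factorial : ℝ) := by
          rw [one_div_mul_eq_div, div_le_div_iff₀ (by positivity) (by positivity)]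
          have := key_nat k m
          calc (k.choose m : ℝ) * ((2 * m).factorial : ℝ)
              = ((k.choose m * (2 * m).factorial : ℕ) : ℝ) := by push_cast; ring
            _ ≤ (((4 * k) ^ m * m.factorial : ℕ) : ℝ) := by exact_mod_cast this
            _ = (4 * (k : ℝ)) ^ m * (m.factorial : ℝ) := by push_cast; ring
        calc (1 / (m.factorial : ℝ)) * (k.choose m : ℝ) * (γ ^ 2) ^ m
            ≤ (4 * (k : ℝ)) ^ m / ((2 * m).factorial : ℝ) * (γ ^ 2) ^ m :=
              mul_le_mul_of_nonneg_right hkey hγ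
          _ = (4 * (k : ℝ)) ^ m * (γ ^ 2) ^ m / ((2 * m).factorial : ℝ) := by ring
    _ ≤ ∑' n, (2 * γ * Real.sqrt k) ^ (2 * n) / ((2 * n).factorial : ℝ) := by
        apply Summable.sum_le_tsum _ _ hs.summable
        intro n _
        have : (0 : ℝ) ≤ (2 * γ * Real.sqrt k) ^ (2 * n) :=
          (even_two_mul n).pow_nonneg _
        positivity
    _ = Real.cosh (2 * γ * Real.sqrt k) := hs.tsum_eq
end

section
/- Let s ∈ (0, 1). If k ∈ ℕ satisfies k ≥ 1/s and γ is a real number with 0 ≤ γ ≤ (1/e)·(s/√(1−s))·√k, then L_k(−γ²) ≥ (2/(5√(s·k)))·cosh(2γ·√((1−s)·k)). -/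
open Real Finset Nat

theorem Nat.sixteen_pow_le_four_mul_mul_centralBinom_sq {m : ℕ} (hm : 0 < m) :
    16 ^ m ≤ 4 * m * m.centralBinom ^ 2 := by
  induction m, hm using Nat.le_induction with
  | base => decide
  | succ n _ ih =>
    have hrec := Nat.succ_mul_centralBinom_succ n
    refine Nat.le_of_mul_le_mul_left ?_ n.succ_pos
    calc (n + 1) * 16 ^ (n + 1) = 16 * ((n + 1) * 16 ^ n) := by ring
      _ ≤ 16 * ((n + 1) * (4 * n * n.centralBinom ^ 2)) := by gcongr
      _ ≤ 4 * (2 * (2 * n + 1) * n.centralBinom) ^ 2 := by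
        nlinarith [Nat.zero_le (n.centralBinom ^ 2)]
      _ = (n + 1) * (4 * (n + 1) * (n + 1).centralBinom ^ 2) := by rw [← hrec]; ring

theorem Nat.factorial_two_mul_eq (m : ℕ) : (2 * m)! = m.centralBinom * m ! ^ 2 := by
  have h := Nat.choose_mul_factorial_mul_factorial (show m ≤ 2 * m by omega)
  rw [show 2 * m - m = m by omega] at h
  rw [← h, Nat.centralBinom]
  ring

theorem four_pow_le_two_mul_sqrt_mul_centralBinom {m : ℕ} {u : ℝ} (hm : (m : ℝ) ≤ u)
    (hu : 1 / 4 ≤ u) : (4 : ℝ) ^ m ≤ 2 * √u * m.centralBinom := by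
  rcases m.eq_zero_or_pos with rfl | hm0
  · have : 1 / 2 ≤ √u := Real.le_sqrt_of_sq_le (by linarith)
    simp only [pow_zero, Nat.centralBinom_zero, Nat.cast_one]
    linarith
  · refine le_of_pow_le_pow_left₀ two_ne_zero (by positivity) ?_
    calc ((4 : ℝ) ^ m) ^ 2 = 16 ^ m := by rw [← pow_mul, mul_comm, pow_mul]; norm_num
      _ ≤ 4 * m * m.centralBinom ^ 2 := by
        exact_mod_cast Nat.sixteen_pow_le_four_mul_mul_centralBinom_sq hm0
      _ ≤ (2 * √u * m.centralBinom) ^ 2 := by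
        rw [mul_pow, mul_pow, sq_sqrt (by linarith)]
        nlinarith [sq_nonneg (m.centralBinom : ℝ)]

theorem sub_pow_le_descFactorial {k m : ℕ} {u : ℝ} (hm : (m : ℝ) ≤ u) (hu : u ≤ k) :
    ((k : ℝ) - u) ^ m ≤ k.descFactorial m := by
  have hmk : m ≤ k + 1 := by
    have : (m : ℝ) ≤ k + 1 := by linarith
    exact_mod_cast this
  calc ((k : ℝ) - u) ^ m ≤ ((k + 1 - m : ℕ) : ℝ) ^ m := by
        gcongr
        rw [Nat.cast_sub hmk]; push_cast; linarith
    _ ≤ k.descFactorial m := by exact_mod_cast Nat.pow_sub_le_descFactorial k m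

noncomputable def coshTerm (x : ℝ) (m : ℕ) : ℝ := x ^ (2 * m) / (2 * m)!

noncomputable def lagTerm (k : ℕ) (y : ℝ) (m : ℕ) : ℝ := 1 / m ! * k.choose m * y ^ m

theorem coshTerm_nonneg (x : ℝ) (m : ℕ) : 0 ≤ coshTerm x m := by
  unfold coshTerm; rw [pow_mul]; positivity

theorem lagTerm_nonneg (k : ℕ) {y : ℝ} (hy : 0 ≤ y) (m : ℕ) : 0 ≤ lagTerm k y m := by
  unfold lagTerm; positivity

theorem hasSum_coshTerm (x : ℝ) : HasSum (coshTerm x) (cosh x) := Real.hasSum_cosh x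

theorem coshTerm_succ (x : ℝ) (m : ℕ) :
    coshTerm x (m + 1) = x ^ 2 / ((2 * m + 1) * (2 * m + 2)) * coshTerm x m := by
  have hfac : ((2 * (m + 1))! : ℝ) = (2 * m + 1) * (2 * m + 2) * (2 * m)! := by
    rw [show 2 * (m + 1) = 2 * m + 1 + 1 by ring, Nat.factorial_succ, Nat.factorial_succ]
    push_cast; ring
  rw [coshTerm, coshTerm, hfac, mul_add, mul_one, pow_add]
  field_simp

theorem coshTerm_succ_le {x r : ℝ} {M m : ℕ} (hr : 0 ≤ r)
    (hx : x ^ 2 ≤ r * ((2 * M + 1) * (2 * M + 2))) (hm : M ≤ m) :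
    coshTerm x (m + 1) ≤ r * coshTerm x m := by
  rw [coshTerm_succ]
  gcongr
  · exact coshTerm_nonneg x m
  · have : (M : ℝ) ≤ m := by exact_mod_cast hm
    rw [div_le_iff₀ (by positivity)]
    calc x ^ 2 ≤ r * ((2 * M + 1) * (2 * M + 2)) := hx
      _ ≤ r * ((2 * m + 1) * (2 * m + 2)) := by gcongr

theorem cosh_le_sum_range_add_div {x r : ℝ} (M : ℕ) (hr0 : 0 ≤ r) (hr1 : r < 1)
    (hx : x ^ 2 ≤ r * ((2 * M + 1) * (2 * M + 2))) :
    cosh x ≤ ∑ m ∈ range M, coshTerm x m + coshTerm x M / (1 - r) := by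
  have hs := (hasSum_coshTerm x).summable
  have hgeom (n : ℕ) : coshTerm x (n + M) ≤ r ^ n * coshTerm x M := by
    have := le_geom (u := fun n => coshTerm x (n + M)) hr0 n fun j _ => by
      simpa only [add_right_comm] using coshTerm_succ_le hr0 hx (Nat.le_add_left M j)
    simpa using this
  have htail : ∑' n, coshTerm x (n + M) ≤ coshTerm x M / (1 - r) := by
    calc ∑' n, coshTerm x (n + M) ≤ ∑' n, r ^ n * coshTerm x M :=
          ((summable_nat_add_iff M).2 hs).tsum_le_tsum hgeom
            ((summable_geometric_of_lt_one hr0 hr1).mul_right _)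
      _ = coshTerm x M / (1 - r) := by
          rw [tsum_mul_right, tsum_geometric_of_lt_one hr0 hr1, div_eq_inv_mul]
  rw [← (hasSum_coshTerm x).tsum_eq, ← hs.sum_add_tsum_nat_add M]
  gcongr

theorem cosh_le_five_div_four_mul_sum_coshTerm {x u : ℝ} (hu : 1 ≤ u)
    (hx : x ^ 2 ≤ 4 * u ^ 2 / 7) :
    cosh x ≤ 5 / 4 * ∑ m ∈ range (⌊u⌋₊ + 1), coshTerm x m := by
  set M := ⌊u⌋₊ with hM
  have hMu : u < M + 1 := Nat.lt_floor_add_one u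
  have hhead : 0 ≤ ∑ m ∈ range M, coshTerm x m := sum_nonneg fun m _ => coshTerm_nonneg x m
  have htM := coshTerm_nonneg x M
  rw [sum_range_succ]
  -- Past `⌊u⌋` consecutive terms have ratio at most `1/5` once `u ≥ 7/4`; below that `⌊u⌋ = 1`.
  rcases le_or_gt (7 / 4) u with hu' | hu'
  · have := cosh_le_sum_range_add_div (x := x) (r := 1 / 5) M (by norm_num) (by norm_num)
      (by nlinarith)
    norm_num at this
    linarith
  · have hM1 : M = 1 := by
      rw [hM, Nat.floor_eq_iff (by linarith)]
      constructor <;> push_cast <;> linarith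
    have := cosh_le_sum_range_add_div (x := x) (r := 2 / 7) M (by norm_num) (by norm_num)
      (by rw [hM1]; push_cast; nlinarith)
    simp only [hM1, coshTerm, sum_range_one] at this ⊢
    norm_num at this ⊢
    nlinarith

theorem coshTerm_le_two_mul_sqrt_mul_lagTerm {k m : ℕ} {u : ℝ} (γ : ℝ) (hm : (m : ℝ) ≤ u)
    (hu : 1 / 4 ≤ u) (huk : u ≤ k) :
    coshTerm (2 * γ * √(k - u)) m ≤ 2 * √u * lagTerm k (γ ^ 2) m := by
  have hpos : (0 : ℝ) < ↑(m.centralBinom * m ! ^ 2) := by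
    exact_mod_cast Nat.mul_pos m.centralBinom_pos (pow_pos m.factorial_pos 2)
  rw [coshTerm, lagTerm, Nat.factorial_two_mul_eq, div_le_iff₀ hpos]
  calc (2 * γ * √(k - u)) ^ (2 * m) = (γ ^ 2) ^ m * ((4 : ℝ) ^ m * ((k : ℝ) - u) ^ m) := by
        rw [pow_mul, mul_pow, mul_pow, sq_sqrt (by linarith)]; ring
    _ ≤ (γ ^ 2) ^ m * ((2 * √u * m.centralBinom) * k.descFactorial m) := by
        gcongr
        · exact four_pow_le_two_mul_sqrt_mul_centralBinom hm hu
        · exact sub_pow_le_descFactorial hm huk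
    _ = 2 * √u * (1 / m ! * k.choose m * (γ ^ 2) ^ m) * ↑(m.centralBinom * m ! ^ 2) := by
        rw [Nat.descFactorial_eq_factorial_mul_choose]
        push_cast
        field_simp

theorem sum_range_lagTerm_le_Lag_neg {n k : ℕ} (hn : n ≤ k + 1) {y : ℝ} (hy : 0 ≤ y) :
    ∑ m ∈ range n, lagTerm k y m ≤ Lag k (-y) := by
  rw [Lag]
  simp only [neg_neg]
  exact sum_le_sum_of_subset_of_nonneg (range_subset_range.2 hn)
    fun m _ _ => lagTerm_nonneg k hy m

theorem sq_two_mul_mul_sqrt_le {s k γ : ℝ} (hs : s ∈ Set.Ioo 0 1) (hk : 0 ≤ k) (hγ0 : 0 ≤ γ)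
    (hγ : γ ≤ 1 / exp 1 * (s / √(1 - s)) * √k) :
    (2 * γ * √((1 - s) * k)) ^ 2 ≤ 4 * (s * k) ^ 2 / 7 := by
  obtain ⟨hs0, hs1⟩ := hs
  have h1s : 0 < 1 - s := by linarith
  have he : 7 ≤ exp 1 ^ 2 := by nlinarith [Real.exp_one_gt_d9]
  have hγ2 : γ ^ 2 * (1 - s) ≤ s ^ 2 * k / exp 1 ^ 2 := by
    have := pow_le_pow_left₀ hγ0 hγ 2
    rw [mul_pow, mul_pow, div_pow, div_pow, sq_sqrt h1s.le, sq_sqrt hk] at this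
    rw [← le_div_iff₀ h1s]
    convert this using 1
    field_simp
  calc (2 * γ * √((1 - s) * k)) ^ 2 = 4 * k * (γ ^ 2 * (1 - s)) := by
        rw [mul_pow, sq_sqrt (by positivity)]; ring
    _ ≤ 4 * k * (s ^ 2 * k / exp 1 ^ 2) := by gcongr
    _ ≤ 4 * k * (s ^ 2 * k / 7) := by gcongr
    _ = 4 * (s * k) ^ 2 / 7 := by ring

/-- If `s ∈ (0,1)`, `k ≥ 1/s`, and `0 ≤ γ ≤ (1/e) (s/√(1-s)) √k`, then
`L_k(-γ²) ≥ (2/(5√(sk))) cosh (2 γ √((1-s) k))`. -/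
theorem laguerre_lower_bound (s : ℝ) (hs : s ∈ Set.Ioo (0 : ℝ) 1) (k : ℕ)
    (hk : 1 / s ≤ (k : ℝ)) (γ : ℝ) (hγ0 : 0 ≤ γ)
    (hγ : γ ≤ 1 / Real.exp 1 * (s / Real.sqrt (1 - s)) * Real.sqrt k) :
    2 / (5 * Real.sqrt (s * k)) * Real.cosh (2 * γ * Real.sqrt ((1 - s) * k)) ≤
      Lag k (-γ ^ 2) := by
  have hu : 1 ≤ s * k := by rwa [div_le_iff₀ hs.1, mul_comm] at hk
  have huk : s * k ≤ k := by nlinarith [hs.2]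
  have hx := sq_two_mul_mul_sqrt_le hs k.cast_nonneg hγ0 hγ
  rw [show (1 - s) * k = k - s * k by ring] at hx ⊢
  set N := ⌊s * k⌋₊ + 1
  have hterms : ∑ m ∈ range N, coshTerm (2 * γ * √(k - s * k)) m ≤
      2 * √(s * k) * ∑ m ∈ range N, lagTerm k (γ ^ 2) m := by
    rw [mul_sum]
    refine sum_le_sum fun m hm => coshTerm_le_two_mul_sqrt_mul_lagTerm γ ?_ (by linarith) huk
    exact (Nat.le_floor_iff (by linarith)).1 (Nat.lt_succ_iff.1 (mem_range.1 hm))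
  have hlag := sum_range_lagTerm_le_Lag_neg (n := N) (k := k)
    (by have := Nat.floor_le_of_le (n := k) huk; omega) (sq_nonneg γ)
  have hsqrt : 0 < √(s * k) := sqrt_pos.2 (by linarith)
  calc 2 / (5 * √(s * k)) * cosh (2 * γ * √(k - s * k))
      ≤ 2 / (5 * √(s * k)) * (5 / 4 * (2 * √(s * k) * ∑ m ∈ range N, lagTerm k (γ ^ 2) m)) := by
        gcongr
        exact (cosh_le_five_div_four_mul_sum_coshTerm hu hx).trans (by gcongr)
    _ = ∑ m ∈ range N, lagTerm k (γ ^ 2) m := by field_simp; ring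
    _ ≤ Lag k (-γ ^ 2) := hlag
end

section
/- Let b be a nonzero real number. For every t > 1 + √5, the double series Σ_{n ∈ ℤ} Σ_{k ∈ ℕ} exp(−t·((bn)²/2 + k))·exp((bn)²)·L_k(−2(bn)²) converges. Consequently σ(b) ≤ 1 + √5, where σ(b) = inf{ t > 0 : Σ_{n ∈ ℤ} Σ_{k ∈ ℕ} exp(−t·((bn)²/2 + k))·exp((bn)²)·L_k(−2(bn)²) < ∞ }. -/
lemma amgm_s11 {e x y : ℝ} (he : 0 < e) : 2 * (x * y) ≤ x ^ 2 / e + e * y ^ 2 := by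
  have h : x ^ 2 / e + e * y ^ 2 - 2 * (x * y) = (x - e * y) ^ 2 / e := by
    field_simp; ring
  nlinarith [div_nonneg (sq_nonneg (x - e * y)) he.le]

lemma lag_nonneg_s11 (k : ℕ) (y : ℝ) (hy : 0 ≤ y) : 0 ≤ Lag k (-y) := by
  unfold Lag
  apply Finset.sum_nonneg
  intro m _
  rw [neg_neg]
  have hm : (0:ℝ) < m.factorial := mod_cast m.factorial_pos
  have : (0:ℝ) ≤ y ^ m := pow_nonneg hy m
  positivity

lemma lag_le (k : ℕ) (y : ℝ) (hy : 0 ≤ y) :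
    Lag k (-y) ≤ Real.exp (2 * Real.sqrt (y * k)) := by
  have hyk : (0:ℝ) ≤ y * k := mul_nonneg hy (Nat.cast_nonneg k)
  have hsq : Real.sqrt (y * k) ^ 2 = y * k := Real.sq_sqrt hyk
  calc Lag k (-y)
      ≤ ∑ m ∈ Finset.range (k + 1), (Real.sqrt (y * k) ^ m / m.factorial) ^ 2 := by
        unfold Lag
        apply Finset.sum_le_sum
        intro m _
        have h1 : (k.choose m : ℝ) ≤ (k:ℝ) ^ m / m.factorial := Nat.choose_le_pow_div m k
        have hm : (0:ℝ) < m.factorial := mod_cast m.factorial_pos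
        have hym : (0:ℝ) ≤ y ^ m := pow_nonneg hy m
        have h2 : (Real.sqrt (y * k) ^ m / m.factorial) ^ 2
            = (y ^ m * (k:ℝ) ^ m) / (m.factorial * m.factorial) := by
          rw [div_pow, ← pow_mul, mul_comm m 2, pow_mul, hsq, mul_pow, sq]
        rw [h2, neg_neg, le_div_iff₀ (by positivity : (0:ℝ) < (m.factorial:ℝ) * m.factorial)]
        have h3 : (k.choose m : ℝ) * m.factorial ≤ (k:ℝ) ^ m := by
          rw [← le_div_iff₀ hm]; exact h1
        have e1 : 1 / (m.factorial:ℝ) * (k.choose m) * y ^ m * (m.factorial * m.factorial)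
            = ((k.choose m : ℝ) * m.factorial) * y ^ m := by field_simp
        rw [e1]
        calc ((k.choose m : ℝ) * m.factorial) * y ^ m
            ≤ (k:ℝ) ^ m * y ^ m := mul_le_mul_of_nonneg_right h3 hym
          _ = y ^ m * (k:ℝ) ^ m := by ring
    _ ≤ (∑ m ∈ Finset.range (k + 1), Real.sqrt (y * k) ^ m / m.factorial) ^ 2 := by
        apply Finset.sum_sq_le_sq_sum_of_nonneg
        intro m _
        positivity
    _ ≤ Real.exp (Real.sqrt (y * k)) ^ 2 := by
        apply pow_le_pow_left₀ (by positivity)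
        exact Real.sum_le_exp_of_nonneg (Real.sqrt_nonneg _) _
    _ = Real.exp (2 * Real.sqrt (y * k)) := by
        rw [two_mul, Real.exp_add, sq]

set_option maxHeartbeats 1000000 in
lemma summable_of_gt (b : ℝ) (hb : b ≠ 0) :
    (∀ t : ℝ, 1 + Real.sqrt 5 < t →
      Summable (fun p : ℤ × ℕ =>
        Real.exp (-t * ((b * (p.1 : ℝ)) ^ 2 / 2 + (p.2 : ℝ))) *
          Real.exp ((b * (p.1 : ℝ)) ^ 2) * Lag p.2 (-2 * (b * (p.1 : ℝ)) ^ 2))) := by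
  intro t ht
  have h5 : (2:ℝ) ≤ Real.sqrt 5 := by
    rw [show (2:ℝ) = Real.sqrt 4 by rw [show (4:ℝ) = 2^2 by norm_num, Real.sqrt_sq]; norm_num]
    exact Real.sqrt_le_sqrt (by norm_num)
  have ht2 : (2:ℝ) < t := by linarith
  have hu : (0:ℝ) < t - 2 := by linarith
  have hA : 4 / (t - 2) < t := by
    rw [div_lt_iff₀ hu]
    have h5' : Real.sqrt 5 ^ 2 = 5 := Real.sq_sqrt (by norm_num)
    nlinarith [Real.sqrt_nonneg 5]
  obtain ⟨ε, hεdef⟩ : ∃ ε : ℝ, ε = (4 / (t - 2) + t) / 2 := ⟨_, rfl⟩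
  have hε0 : 0 < ε := by
    have : 0 < 4 / (t-2) := by positivity
    rw [hεdef]; linarith
  have hεt : ε < t := by rw [hεdef]; linarith
  have hεbig : 4 / (t - 2) < ε := by rw [hεdef]; linarith
  have hεu : 4 < ε * (t - 2) := by
    have := (div_lt_iff₀ hu).mp hεbig
    linarith
  obtain ⟨c, hcdef⟩ : ∃ c : ℝ, c = 1 - t / 2 + 2 / ε := ⟨_, rfl⟩
  have hc : c < 0 := by
    have h2ε : 2 / ε < t / 2 - 1 := by
      rw [div_lt_iff₀ hε0]; nlinarith
    rw [hcdef]; linarith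
  obtain ⟨d, hddef⟩ : ∃ d : ℝ, d = ε - t := ⟨_, rfl⟩
  have hd : d < 0 := by rw [hddef]; linarith
  -- dominating function
  have hcb : c * b ^ 2 < 0 := mul_neg_of_neg_of_pos hc (by positivity)
  have hfnat : Summable (fun n : ℕ => Real.exp (c * (b * (n : ℝ)) ^ 2)) := by
    refine Summable.of_nonneg_of_le (fun n => (Real.exp_pos _).le)
      (fun n => ?_) (summable_geometric_of_lt_one (Real.exp_nonneg _)
        (Real.exp_lt_one_iff.mpr hcb))
    show Real.exp (c * (b * (n : ℝ)) ^ 2) ≤ Real.exp (c * b ^ 2) ^ n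
    rw [← Real.exp_nat_mul]
    apply Real.exp_le_exp.mpr
    have hn : (n : ℝ) ≤ (n : ℝ) ^ 2 := by
      have : n ≤ n ^ 2 := Nat.le_self_pow two_ne_zero n
      exact_mod_cast this
    have := mul_le_mul_of_nonpos_left hn hcb.le
    calc c * (b * (n:ℝ)) ^ 2 = c * b ^ 2 * (n:ℝ)^2 := by ring
      _ ≤ c * b ^ 2 * (n:ℝ) := this
      _ = (n:ℝ) * (c * b ^ 2) := by ring
  have hfint : Summable (fun n : ℤ => Real.exp (c * (b * (n : ℝ)) ^ 2)) := by
    refine Summable.of_nat_of_neg ?_ ?_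
    · have e : (fun n : ℕ => Real.exp (c * (b * (((n:ℤ)) : ℝ)) ^ 2))
          = fun n : ℕ => Real.exp (c * (b * (n : ℝ)) ^ 2) := by
        funext n; push_cast; ring_nf
      exact e ▸ hfnat
    · have e : (fun n : ℕ => Real.exp (c * (b * ((-(n:ℤ) : ℤ) : ℝ)) ^ 2))
          = fun n : ℕ => Real.exp (c * (b * (n : ℝ)) ^ 2) := by
        funext n; push_cast; ring_nf
      exact e ▸ hfnat
  have hgnat : Summable (fun k : ℕ => Real.exp (d * (k : ℝ))) := by
    have : ∀ k : ℕ, Real.exp (d * (k:ℝ)) = Real.exp d ^ k := by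
      intro k; rw [← Real.exp_nat_mul]; ring_nf
    simp_rw [this]
    exact summable_geometric_of_lt_one (Real.exp_nonneg _) (Real.exp_lt_one_iff.mpr hd)
  have hF : Summable (fun p : ℤ × ℕ =>
      Real.exp (c * (b * (p.1 : ℝ)) ^ 2) * Real.exp (d * (p.2 : ℝ))) :=
    hfint.mul_of_nonneg hgnat (fun n => (Real.exp_pos _).le) (fun k => (Real.exp_pos _).le)
  apply Summable.of_nonneg_of_le _ _ hF
  · intro p
    set a : ℝ := (b * (p.1 : ℝ)) ^ 2
    have ha : 0 ≤ a := sq_nonneg _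
    have h0 : -2 * a = -(2 * a) := by ring
    have := lag_nonneg_s11 p.2 (2 * a) (by linarith)
    rw [← h0] at this
    positivity
  · intro p
    set a : ℝ := (b * (p.1 : ℝ)) ^ 2 with hadef
    have ha : 0 ≤ a := sq_nonneg _
    set k : ℕ := p.2
    have h0 : -2 * a = -(2 * a) := by ring
    have hlag : Lag k (-2 * a) ≤ Real.exp (2 * Real.sqrt (2 * a * k)) := by
      rw [h0]; exact lag_le k (2 * a) (by linarith)
    have hs : Real.sqrt (2 * a * k) = Real.sqrt (2 * a) * Real.sqrt k :=
      Real.sqrt_mul (by linarith) _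
    have h1 : Real.sqrt (2 * a) ^ 2 = 2 * a := Real.sq_sqrt (by linarith)
    have h2 : Real.sqrt (k : ℝ) ^ 2 = (k : ℝ) := Real.sq_sqrt (Nat.cast_nonneg k)
    have hdiv : 2 / ε * ε = 2 := div_mul_cancel₀ 2 hε0.ne'
    have key : 2 * Real.sqrt (2 * a * k) ≤ 2 / ε * a + ε * k := by
      rw [hs]
      calc 2 * (Real.sqrt (2 * a) * Real.sqrt (k : ℝ))
          ≤ Real.sqrt (2 * a) ^ 2 / ε + ε * Real.sqrt (k : ℝ) ^ 2 := amgm_s11 hε0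
        _ = 2 / ε * a + ε * k := by rw [h1, h2]; ring
    calc Real.exp (-t * (a / 2 + (k : ℝ))) * Real.exp a * Lag k (-2 * a)
        ≤ Real.exp (-t * (a / 2 + (k : ℝ))) * Real.exp a *
            Real.exp (2 * Real.sqrt (2 * a * k)) := by
          apply mul_le_mul_of_nonneg_left hlag (by positivity)
      _ = Real.exp (-t * (a / 2 + (k : ℝ)) + a + 2 * Real.sqrt (2 * a * k)) := by
          rw [← Real.exp_add, ← Real.exp_add]
      _ ≤ Real.exp (c * a + d * (k : ℝ)) := by
          apply Real.exp_le_exp.mpr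
          have : c * a + d * (k:ℝ) = (-t * (a / 2 + (k:ℝ)) + a) + (2 / ε * a + ε * k) := by
            rw [hcdef, hddef]; ring
          linarith [key]
      _ = Real.exp (c * a) * Real.exp (d * (k : ℝ)) := Real.exp_add _ _


/-- For every `t > 1 + √5` the double series converges; consequently `σ(b) ≤ 1 + √5`. -/
theorem sigma_le_one_add_sqrt_five (b : ℝ) (hb : b ≠ 0) :
    (∀ t : ℝ, 1 + Real.sqrt 5 < t →
      Summable (fun p : ℤ × ℕ =>
        Real.exp (-t * ((b * (p.1 : ℝ)) ^ 2 / 2 + (p.2 : ℝ))) *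
          Real.exp ((b * (p.1 : ℝ)) ^ 2) * Lag p.2 (-2 * (b * (p.1 : ℝ)) ^ 2))) ∧
    sigma b ≤ 1 + Real.sqrt 5 := by
  have hsum := summable_of_gt b hb
  refine ⟨hsum, ?_⟩
  unfold sigma
  have hbdd : BddBelow {t : ℝ | 0 < t ∧ Summable (fun p : ℤ × ℕ =>
      Real.exp (-t * ((b * (p.1 : ℝ)) ^ 2 / 2 + (p.2 : ℝ))) *
        Real.exp ((b * (p.1 : ℝ)) ^ 2) * Lag p.2 (-2 * (b * (p.1 : ℝ)) ^ 2))} :=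
    ⟨0, fun x hx => hx.1.le⟩
  refine le_of_forall_gt_imp_ge_of_dense fun u hu => ?_
  have hu0 : 0 < u := by
    have : (0:ℝ) ≤ Real.sqrt 5 := Real.sqrt_nonneg 5
    linarith
  exact csInf_le hbdd ⟨hu0, hsum u hu⟩
end

section
/- Define h : ℝ → ℝ by h(u) = (u + sinh u · cosh u)/cosh²u. Then: h is an odd function; h(0) = 0; h is strictly increasing on [0, τ/2]; h(τ/2) = τ/2; h is strictly decreasing on [τ/2, ∞); and h(u) → 1 as u → +∞. -/
/-- The function `h(u) = (u + sinh u cosh u)/cosh²u`. -/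
noncomputable def hFun (u : ℝ) : ℝ := (u + Real.sinh u * Real.cosh u) / Real.cosh u ^ 2

/-!
Differentiating, `h'(u) = 2 (cosh u - u sinh u) / cosh³ u`. The numerator has derivative
`-u cosh u`, so it is strictly decreasing on `[0, ∞)`, and it vanishes exactly where
`coth u = u`, i.e. at `τ/2`; this gives the monotonicity. At that point
`u + sinh u cosh u = u (1 + sinh² u) = u cosh² u`, so `h(τ/2) = τ/2`. The limit follows from
`h(u) = u / cosh² u + tanh u` with `u ≤ cosh u`.
-/

open Real Filter Set Topology

lemma hFun_neg (u : ℝ) : hFun (-u) = -hFun u := by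
  simp only [hFun, sinh_neg, cosh_neg]
  ring

lemma hFun_zero : hFun 0 = 0 := by
  simp [hFun]

lemma hFun_eq_div_add_tanh (u : ℝ) : hFun u = u / cosh u ^ 2 + tanh u := by
  have hc : cosh u ≠ 0 := (cosh_pos u).ne'
  rw [tanh_eq_sinh_div_cosh, hFun]
  field_simp

lemma hFun_eq_self_of_cosh_eq {a : ℝ} (ha : cosh a = a * sinh a) : hFun a = a := by
  have hc : cosh a ^ 2 ≠ 0 := by positivity
  rw [hFun, div_eq_iff hc]
  linear_combination sinh a * ha - a * cosh_sq a

lemma continuous_hFun : Continuous hFun :=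
  (continuous_id.add (continuous_sinh.mul continuous_cosh)).div (continuous_cosh.pow 2)
    fun u => by positivity

lemma hasDerivAt_hFun (u : ℝ) :
    HasDerivAt hFun (2 * (cosh u - u * sinh u) / cosh u ^ 3) u := by
  have hnum : HasDerivAt (fun u => u + sinh u * cosh u)
      (1 + (cosh u * cosh u + sinh u * sinh u)) u :=
    (hasDerivAt_id u).add ((hasDerivAt_sinh u).mul (hasDerivAt_cosh u))
  have hden : HasDerivAt (fun u => cosh u ^ 2) (2 * cosh u ^ 1 * sinh u) u :=
    (hasDerivAt_cosh u).pow 2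
  refine (hnum.div hden (by positivity)).congr_deriv ?_
  rw [div_eq_div_iff (by positivity) (by positivity)]
  linear_combination cosh u ^ 5 * cosh_sq u

lemma strictAntiOn_cosh_sub_mul_sinh :
    StrictAntiOn (fun u => cosh u - u * sinh u) (Ici 0) := by
  refine strictAntiOn_of_hasDerivWithinAt_neg (convex_Ici 0) (f' := fun u => -(u * cosh u))
    (by fun_prop) (fun u _ => ?_) (fun u hu => ?_)
  · exact (((hasDerivAt_cosh u).sub ((hasDerivAt_id' u).mul (hasDerivAt_sinh u))).congr_deriv
      (by ring)).hasDerivWithinAt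
  · rw [interior_Ici, mem_Ioi] at hu
    have := mul_pos hu (cosh_pos u)
    linarith

lemma strictMonoOn_hFun_Icc {a : ℝ} (ha : cosh a = a * sinh a) :
    StrictMonoOn hFun (Icc 0 a) := by
  refine strictMonoOn_of_hasDerivWithinAt_pos (convex_Icc 0 a) continuous_hFun.continuousOn
    (fun u _ => (hasDerivAt_hFun u).hasDerivWithinAt) fun u hu => ?_
  rw [interior_Icc, mem_Ioo] at hu
  have hg : cosh a - a * sinh a < cosh u - u * sinh u :=
    strictAntiOn_cosh_sub_mul_sinh hu.1.le (hu.1.trans hu.2).le hu.2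
  exact div_pos (mul_pos two_pos (by linarith)) (by positivity)

lemma strictAntiOn_hFun_Ici {a : ℝ} (ha0 : 0 ≤ a) (ha : cosh a = a * sinh a) :
    StrictAntiOn hFun (Ici a) := by
  refine strictAntiOn_of_hasDerivWithinAt_neg (convex_Ici a) continuous_hFun.continuousOn
    (fun u _ => (hasDerivAt_hFun u).hasDerivWithinAt) fun u hu => ?_
  rw [interior_Ici, mem_Ioi] at hu
  have hg : cosh u - u * sinh u < cosh a - a * sinh a :=
    strictAntiOn_cosh_sub_mul_sinh ha0 (ha0.trans hu.le) hu
  exact div_neg_of_neg_of_pos (by linarith) (by positivity)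

lemma Real.self_le_cosh (x : ℝ) : x ≤ cosh x := by
  rcases le_total 0 x with hx | hx
  · exact (self_le_sinh_iff.2 hx).trans (sinh_lt_cosh x).le
  · exact hx.trans (cosh_pos x).le

lemma Real.tendsto_cosh_atTop : Tendsto cosh atTop atTop :=
  tendsto_atTop_mono self_le_cosh tendsto_id

lemma Real.tendsto_tanh_atTop : Tendsto tanh atTop (𝓝 1) := by
  have htanh : ∀ u, tanh u = 1 - exp (-u) * (cosh u)⁻¹ := fun u => by
    rw [tanh_eq_sinh_div_cosh, ← cosh_sub_sinh]
    field_simp [(cosh_pos u).ne']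
    ring
  rw [funext htanh]
  simpa using (tendsto_const_nhds (x := (1 : ℝ))).sub
    (tendsto_exp_neg_atTop_nhds_zero.mul (tendsto_inv_atTop_zero.comp tendsto_cosh_atTop))

lemma tendsto_div_cosh_sq_atTop : Tendsto (fun u => u / cosh u ^ 2) atTop (𝓝 0) := by
  refine squeeze_zero' (eventually_ge_atTop 0 |>.mono fun u hu => by positivity)
    (eventually_ge_atTop 0 |>.mono fun u hu => ?_)
    (tendsto_inv_atTop_zero.comp tendsto_cosh_atTop)
  calc u / cosh u ^ 2 ≤ cosh u / cosh u ^ 2 := by gcongr; exact self_le_cosh u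
    _ = (cosh u)⁻¹ := by field_simp

lemma tendsto_hFun_atTop : Tendsto hFun atTop (𝓝 1) := by
  rw [funext hFun_eq_div_add_tanh]
  simpa using tendsto_div_cosh_sq_atTop.add tendsto_tanh_atTop

/-- `h` is odd, vanishes at `0`, strictly increases on `[0, τ/2]` up to `h(τ/2) = τ/2`,
strictly decreases on `[τ/2, ∞)`, and tends to `1` at `+∞`, where `τ` is the unique positive
solution of `coth (τ/2) = τ/2`. -/
theorem hFun_properties (τ : ℝ) (hτpos : 0 < τ)
    (hτ : Real.cosh (τ / 2) / Real.sinh (τ / 2) = τ / 2) :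
    (∀ u : ℝ, hFun (-u) = -hFun u) ∧
    hFun 0 = 0 ∧
    StrictMonoOn hFun (Set.Icc 0 (τ / 2)) ∧
    hFun (τ / 2) = τ / 2 ∧
    StrictAntiOn hFun (Set.Ici (τ / 2)) ∧
    Filter.Tendsto hFun Filter.atTop (nhds 1) := by
  have hτ2 : 0 ≤ τ / 2 := by positivity
  have hfix : cosh (τ / 2) = τ / 2 * sinh (τ / 2) :=
    (div_eq_iff (sinh_pos_iff.2 (by positivity)).ne').1 hτ
  exact ⟨hFun_neg, hFun_zero, strictMonoOn_hFun_Icc hfix, hFun_eq_self_of_cosh_eq hfix,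
    strictAntiOn_hFun_Ici hτ2 hfix, tendsto_hFun_atTop⟩
end
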